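/- arXiv:math/0002014 — 2 statements merged into one kernel-verified Lean document; each statement's English description precedes it below -/
import Mathlib

section
/- Let A be Azumaya over commutative Noetherian R. Then for each m ≥ 0, D^m_k(A) is generated as an A-bimodule by the extensions of elements of D^m_k(R): D^m_k(A) = (A⊗_R A^op) · {φ̄ : φ ∈ D^m_k(R)} · (A⊗_R A^op). Explicitly, every Φ ∈ D^m_k(A) equals Σ_{i,j} ρ_{b_i} ∘ (f_i Φ ρ_{b_j})‾ ∘ f_j. -/
/-!
The components `(Φ)_{i,j}` are compressions `r ↦ g (a * Φ (r * c))` of `Φ` to operators on `R`.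
Because `R` is central in `A`, compression absorbs the bimodule actions into `a` and `c` and
turns the commutator with `r ∈ R` into the compression of the commutator with the image of `r`
in `A`; by induction on `m` it therefore maps `D^m_k(A)` into `D^m_k(R)`. The decomposition of
`Φ` is the dual basis identity `x = Σ_j f_j(x) b_j`, applied once to the argument and once to
the value, together with `φ̄ r = φ r` on `R`, which holds since `b_0 = 1` and `f_i` restricts
to `δ_{i0}` on `R`.
-/

open MulOpposite

instance (priority := 900) smulCommSelf' {k A : Type*} [CommSemiring k] [Semiring A]
    [Algebra k A] : SMulCommClass A k A := SMulCommClass.symm k A A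

variable (k : Type*) [Field k]
variable (A : Type*) [Ring A] [Algebra k A]
variable (L : Type*) [AddCommGroup L] [Module k L] [Module A L] [SMulCommClass A k L]

/-- Left action of `A` on `L` as a `k`-linear endomorphism. -/
def lop (a : A) : L →ₗ[k] L where
  toFun x := a • x
  map_add' := smul_add a
  map_smul' c x := smul_comm a c x

/-- The `A`-sub-bimodule (as an additive subgroup closed under both actions)
generated by a set of operators. -/
def genBi (T : Set (L →ₗ[k] L)) : AddSubgroup (L →ₗ[k] L) :=
  AddSubgroup.closure {ψ | ∃ a b : A, ∃ t ∈ T, ψ = (lop k A L a).comp (t.comp (lop k A L b))}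

/-- The Lunts–Rosenberg filtration of differential operators on the left `A`-module `L`:
`Dfil 0` is the sub-bimodule generated by the central elements of `Hom_k(L,L)`, and
`Dfil (m+1)` is the sub-bimodule generated by operators whose commutators with `A`
lie in `Dfil m`. -/
def Dfil : ℕ → AddSubgroup (L →ₗ[k] L)
  | 0 => genBi k A L {φ | ∀ a : A, (lop k A L a).comp φ = φ.comp (lop k A L a)}
  | (m+1) => genBi k A L {φ | ∀ a : A, (lop k A L a).comp φ - φ.comp (lop k A L a) ∈ Dfil m}

/-- The ring of differential operators: union of the filtration. -/
def Ddiff : Set (L →ₗ[k] L) := ⋃ m, (Dfil k A L m : Set (L →ₗ[k] L))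

open TensorProduct MulOpposite in
/-- The Azumaya condition for an `R`-algebra `A`: finitely generated, projective and
faithful as an `R`-module, `R·1` is the center of `A`, and the canonical map
`A ⊗_R A^op → End_R(A)`, `a ⊗ b^op ↦ (c ↦ a c b)`, is bijective (here recorded as the
existence of a linear equivalence realizing this map). -/
structure IsAzumayaAlg (R A : Type*) [CommRing R] [Ring A] [Algebra R A] : Prop where
  finite : Module.Finite R A
  projective : Module.Projective R A
  faithful : FaithfulSMul R A
  center_le : ∀ a : A, (∀ b : A, a * b = b * a) → ∃ r : R, algebraMap R A r = a
  bij : ∃ e : (A ⊗[R] Aᵐᵒᵖ) ≃ₗ[R] (A →ₗ[R] A),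
      ∀ (a b x : A), e (a ⊗ₜ[R] op b) x = a * x * b

section DualBasis

variable (k R A : Type*) [Field k] [CommRing R] [Algebra k R] [Ring A] [Algebra R A]
  [Algebra k A] [IsScalarTower k R A] [SMulCommClass R k A] {n : ℕ}

/-- The extension `φ̄ = Σ_i ρ_{b_i} ∘ φ ∘ f_i ∈ Hom_k(A,A)` of an operator
`φ ∈ Hom_k(R,R)`, relative to a dual basis `{b_i, f_i}` of the `R`-module `A`. -/
noncomputable def extOp (b : Fin (n + 1) → A) (f : Fin (n + 1) → (A →ₗ[R] R))
    (φ : R →ₗ[k] R) : A →ₗ[k] A :=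
  ∑ i, (LinearMap.mulRight k (b i)).comp
    (((Algebra.linearMap R A).restrictScalars k).comp (φ.comp ((f i).restrictScalars k)))

end DualBasis

section Operators

variable {k : Type*} [Field k] {A : Type*} [Ring A]
  {L : Type*} [AddCommGroup L] [Module k L] [Module A L] [SMulCommClass A k L]

@[simp] lemma lop_apply (a : A) (x : L) : lop k A L a x = a • x := rfl

lemma lop_one : lop k A L 1 = LinearMap.id := by
  ext x
  exact one_smul A x

lemma subset_genBi (T : Set (L →ₗ[k] L)) : T ⊆ genBi k A L T := fun t ht =>
  AddSubgroup.subset_closure ⟨1, 1, t, ht, by rw [lop_one, LinearMap.id_comp, LinearMap.comp_id]⟩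

end Operators

section Compress

variable (k R A : Type*) [Field k] [CommRing R] [Algebra k R] [Ring A] [Algebra R A]
  [Algebra k A] [IsScalarTower k R A]

noncomputable def compressOp (g : A →ₗ[R] R) (a c : A) : (A →ₗ[k] A) →+ (R →ₗ[k] R) where
  toFun Φ := (g.restrictScalars k).comp ((lop k A A a).comp (Φ.comp
    ((LinearMap.mulRight k c).comp ((Algebra.linearMap R A).restrictScalars k))))
  map_zero' := by ext; simp
  map_add' Φ Ψ := by ext; simp [mul_add]

variable {k R A}

lemma compressOp_apply (g : A →ₗ[R] R) (a c : A) (Φ : A →ₗ[k] A) (r : R) :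
    compressOp k R A g a c Φ r = g (a * Φ (algebraMap R A r * c)) := by
  simp [compressOp]

lemma compressOp_lop_comp_comp (g : A →ₗ[R] R) (a c a' b' : A) (t : A →ₗ[k] A) :
    compressOp k R A g a c ((lop k A A a').comp (t.comp (lop k A A b')))
      = compressOp k R A g (a * a') (b' * c) t := by
  ext
  simp only [compressOp_apply, LinearMap.comp_apply, lop_apply, smul_eq_mul, mul_assoc,
    Algebra.commutes]

lemma compressOp_commutator (g : A →ₗ[R] R) (a c : A) (t : A →ₗ[k] A) (r : R) :
    (lop k R R r).comp (compressOp k R A g a c t) - (compressOp k R A g a c t).comp (lop k R R r)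
      = compressOp k R A g a c ((lop k A A (algebraMap R A r)).comp t
          - t.comp (lop k A A (algebraMap R A r))) := by
  ext s
  have hleft : r * g (a * t (algebraMap R A s * c))
      = g (a * (algebraMap R A r * t (algebraMap R A s * c))) := by
    rw [← smul_eq_mul, ← map_smul, Algebra.smul_def, ← mul_assoc, Algebra.commutes, mul_assoc]
  simp only [LinearMap.sub_apply, LinearMap.comp_apply, compressOp_apply, map_sub, lop_apply,
    smul_eq_mul, hleft, map_mul, mul_assoc]

lemma compressOp_mem_genBi {T : Set (A →ₗ[k] A)} {T' : Set (R →ₗ[k] R)}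
    (hT : ∀ g a c, ∀ t ∈ T, compressOp k R A g a c t ∈ T') (g : A →ₗ[R] R) (a c : A)
    {Φ : A →ₗ[k] A} (hΦ : Φ ∈ genBi k A A T) :
    compressOp k R A g a c Φ ∈ genBi k R R T' := by
  revert hΦ
  suffices genBi k A A T ≤ (genBi k R R T').comap (compressOp k R A g a c) from (this ·)
  refine (AddSubgroup.closure_le _).mpr ?_
  rintro _ ⟨a', b', t, ht, rfl⟩
  simp only [SetLike.mem_coe, AddSubgroup.mem_comap, compressOp_lop_comp_comp]
  exact subset_genBi _ (hT _ _ _ t ht)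

theorem compressOp_mem_Dfil (g : A →ₗ[R] R) (a c : A) {m : ℕ} {Φ : A →ₗ[k] A}
    (hΦ : Φ ∈ Dfil k A A m) : compressOp k R A g a c Φ ∈ Dfil k R R m := by
  induction m generalizing g a c Φ with
  | zero =>
    refine compressOp_mem_genBi (fun g a c t ht r => ?_) g a c hΦ
    have hcomm := compressOp_commutator g a c t r
    rwa [ht, sub_self, map_zero, sub_eq_zero] at hcomm
  | succ m ih =>
    refine compressOp_mem_genBi (fun g a c t ht r => ?_) g a c hΦ
    rw [compressOp_commutator]
    exact ih g a c (ht _)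

lemma extOp_algebraMap {n : ℕ} {b : Fin (n + 1) → A} {f : Fin (n + 1) → (A →ₗ[R] R)} (hb0 : b 0 = 1)
    (hf0 : ∀ r : R, f 0 (algebraMap R A r) = r)
    (hfi : ∀ i, i ≠ 0 → ∀ r : R, f i (algebraMap R A r) = 0) (φ : R →ₗ[k] R) (r : R) :
    extOp k R A b f φ (algebraMap R A r) = algebraMap R A (φ r) := by
  rw [extOp, LinearMap.sum_apply, Finset.sum_eq_single_of_mem 0 (Finset.mem_univ _)]
  · simp [hf0, hb0]
  · intro i _ hi
    simp [hfi i hi]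

end Compress

section Stmt11

variable (k R A : Type*) [Field k] [CommRing R] [Algebra k R] [Ring A] [Algebra R A]
  [Algebra k A] [IsScalarTower k R A] [SMulCommClass R k A] {n : ℕ}

/-- The component `(Φ)_{i,j} = f_i ∘ Φ ∘ ρ_{b_j}`, an operator on `R`. -/
noncomputable def phiComp (b : Fin (n + 1) → A) (f : Fin (n + 1) → (A →ₗ[R] R))
    (Φ : A →ₗ[k] A) (i j : Fin (n + 1)) : R →ₗ[k] R :=
  ((f i).restrictScalars k).comp (Φ.comp ((LinearMap.mulRight k (b j)).comp
    ((Algebra.linearMap R A).restrictScalars k)))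

omit [SMulCommClass R k A] in
lemma phiComp_eq_compressOp (b : Fin (n + 1) → A) (f : Fin (n + 1) → (A →ₗ[R] R))
    (Φ : A →ₗ[k] A) (i j : Fin (n + 1)) :
    phiComp k R A b f Φ i j = compressOp k R A (f i) 1 (b j) Φ := by
  ext
  simp [phiComp, compressOp_apply]

variable {k R A} in
omit [SMulCommClass R k A] in
lemma eq_sum_extOp_phiComp {b : Fin (n + 1) → A} {f : Fin (n + 1) → (A →ₗ[R] R)}
    (hdb : ∀ a : A, ∑ i, f i a • b i = a) (hb0 : b 0 = 1)
    (hf0 : ∀ r : R, f 0 (algebraMap R A r) = r)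
    (hfi : ∀ i, i ≠ 0 → ∀ r : R, f i (algebraMap R A r) = 0) (Φ : A →ₗ[k] A) :
    Φ = ∑ i, ∑ j, (LinearMap.mulRight k (b i)).comp
      ((extOp k R A b f (phiComp k R A b f Φ i j)).comp
        (((Algebra.linearMap R A).restrictScalars k).comp ((f j).restrictScalars k))) := by
  have hdb' (x : A) : ∑ j, algebraMap R A (f j x) * b j = x := by
    simpa only [Algebra.smul_def] using hdb x
  ext x
  simp only [LinearMap.sum_apply, LinearMap.comp_apply, LinearMap.restrictScalars_apply,
    Algebra.linearMap_apply, extOp_algebraMap hb0 hf0 hfi, LinearMap.mulRight_apply, phiComp]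
  calc Φ x = ∑ i, algebraMap R A (f i (Φ x)) * b i := (hdb' (Φ x)).symm
    _ = ∑ i, ∑ j, algebraMap R A (f i (Φ (algebraMap R A (f j x) * b j))) * b i := by
      simp only [← Finset.sum_mul, ← map_sum, hdb']

theorem Dfil_azumaya_generated_by_ext
    (b : Fin (n + 1) → A) (f : Fin (n + 1) → (A →ₗ[R] R))
    (hdb : ∀ a : A, ∑ i, f i a • b i = a) (hb0 : b 0 = 1)
    (hf0 : ∀ r : R, f 0 (algebraMap R A r) = r)
    (hfi : ∀ i, i ≠ 0 → ∀ r : R, f i (algebraMap R A r) = 0)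
    (m : ℕ) (Φ : A →ₗ[k] A) (hΦ : Φ ∈ Dfil k A A m) :
    (∀ i j, phiComp k R A b f Φ i j ∈ Dfil k R R m) ∧
    Φ = ∑ i, ∑ j, (LinearMap.mulRight k (b i)).comp
      ((extOp k R A b f (phiComp k R A b f Φ i j)).comp
        (((Algebra.linearMap R A).restrictScalars k).comp ((f j).restrictScalars k))) := by
  refine ⟨fun i j => ?_, eq_sum_extOp_phiComp hdb hb0 hf0 hfi Φ⟩
  rw [phiComp_eq_compressOp]
  exact compressOp_mem_Dfil _ _ _ hΦ

end Stmt11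
end

section
/- Let A be Azumaya over commutative Noetherian R. Then D_k(A) is a simple ring if and only if D_k(R) is; D_k(A) is Noetherian iff D_k(R) is; and D_k(A) is a prime ring iff D_k(R) is. -/
open MulOpposite

variable (k : Type*) [Field k]
variable (A : Type*) [Ring A] [Algebra k A]
variable (L : Type*) [AddCommGroup L] [Module k L] [Module A L] [SMulCommClass A k L]

-- ==================== my aux section ====================
set_option linter.unusedSectionVars false
namespace Transfer

section General

variable {𝕜 B M : Type*} [Field 𝕜] [Ring B] [Algebra 𝕜 B]
  [AddCommGroup M] [Module 𝕜 M] [Module B M] [SMulCommClass B 𝕜 M]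

@[simp] lemma lop_apply (b : B) (x : M) : lop 𝕜 B M b x = b • x := rfl

lemma lop_one : lop 𝕜 B M 1 = LinearMap.id := by ext x; simp

lemma lop_mul (b b' : B) : lop 𝕜 B M (b * b') = (lop 𝕜 B M b) ∘ₗ (lop 𝕜 B M b') := by
  ext x; simp [mul_smul]

lemma mem_genBi_of_mem {T : Set (M →ₗ[𝕜] M)} {t : M →ₗ[𝕜] M} (ht : t ∈ T) :
    t ∈ genBi 𝕜 B M T := by
  apply AddSubgroup.subset_closure
  exact ⟨1, 1, t, ht, by rw [lop_one]; ext x; simp⟩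

lemma genBi_le {T : Set (M →ₗ[𝕜] M)} {H : AddSubgroup (M →ₗ[𝕜] M)}
    (h : ∀ a b : B, ∀ t ∈ T, (lop 𝕜 B M a) ∘ₗ t ∘ₗ (lop 𝕜 B M b) ∈ H) :
    genBi 𝕜 B M T ≤ H := by
  apply (AddSubgroup.closure_le _).2
  rintro ψ ⟨a, b, t, ht, rfl⟩
  exact h a b t ht

lemma lop_comp_mem_genBi {T : Set (M →ₗ[𝕜] M)} (a b : B) {φ : M →ₗ[𝕜] M}
    (h : φ ∈ genBi 𝕜 B M T) : (lop 𝕜 B M a) ∘ₗ φ ∘ₗ (lop 𝕜 B M b) ∈ genBi 𝕜 B M T := by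
  induction h using AddSubgroup.closure_induction with
  | mem ψ hψ =>
    obtain ⟨a', b', t, ht, rfl⟩ := hψ
    apply AddSubgroup.subset_closure
    exact ⟨a * a', b' * b, t, ht, by simp [lop_mul, LinearMap.comp_assoc]⟩
  | zero => simpa using (genBi 𝕜 B M T).zero_mem
  | add x y _ _ hx hy => simpa [LinearMap.comp_add, LinearMap.add_comp] using
      (genBi 𝕜 B M T).add_mem hx hy
  | neg x _ hx => simpa [LinearMap.comp_neg, LinearMap.neg_comp] using
      (genBi 𝕜 B M T).neg_mem hx

lemma Dfil_zero : Dfil 𝕜 B M 0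
    = genBi 𝕜 B M {φ | ∀ a : B, (lop 𝕜 B M a).comp φ = φ.comp (lop 𝕜 B M a)} := rfl

lemma Dfil_succ (m : ℕ) : Dfil 𝕜 B M (m+1)
    = genBi 𝕜 B M {φ | ∀ a : B,
        (lop 𝕜 B M a).comp φ - φ.comp (lop 𝕜 B M a) ∈ Dfil 𝕜 B M m} := rfl

lemma lop_comp_mem_Dfil (m : ℕ) (a b : B) {φ : M →ₗ[𝕜] M} (h : φ ∈ Dfil 𝕜 B M m) :
    (lop 𝕜 B M a) ∘ₗ φ ∘ₗ (lop 𝕜 B M b) ∈ Dfil 𝕜 B M m := by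
  cases m with
  | zero => exact lop_comp_mem_genBi a b h
  | succ m => exact lop_comp_mem_genBi a b h

lemma mem_Dfil_zero_of_central {φ : M →ₗ[𝕜] M}
    (h : ∀ a : B, (lop 𝕜 B M a).comp φ = φ.comp (lop 𝕜 B M a)) : φ ∈ Dfil 𝕜 B M 0 :=
  mem_genBi_of_mem h

lemma mem_Dfil_succ_of_comm {m : ℕ} {φ : M →ₗ[𝕜] M}
    (h : ∀ a : B, (lop 𝕜 B M a).comp φ - φ.comp (lop 𝕜 B M a) ∈ Dfil 𝕜 B M m) :
    φ ∈ Dfil 𝕜 B M (m+1) :=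
  mem_genBi_of_mem h

lemma Dfil_le_succ (m : ℕ) : Dfil 𝕜 B M m ≤ Dfil 𝕜 B M (m+1) := by
  induction m with
  | zero =>
    refine genBi_le ?_
    rintro a b t ht
    refine lop_comp_mem_genBi a b (mem_genBi_of_mem ?_)
    intro a'
    rw [ht a', sub_self]
    exact (Dfil 𝕜 B M 0).zero_mem
  | succ m ih =>
    refine genBi_le ?_
    rintro a b t ht
    exact lop_comp_mem_genBi a b (mem_genBi_of_mem fun a' => ih (ht a'))

lemma Dfil_mono {m m' : ℕ} (h : m ≤ m') : Dfil 𝕜 B M m ≤ Dfil 𝕜 B M m' := by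
  induction h with
  | refl => exact le_rfl
  | step _ ih => exact le_trans ih (Dfil_le_succ _)

end General

section ASide

variable {𝕜 B : Type*} [Field 𝕜] [Ring B] [Algebra 𝕜 B]

@[simp] lemma lopB_apply (b x : B) : lop 𝕜 B B b x = b * x := rfl

/-- right multiplication as a `𝕜`-linear endomorphism -/
def rop (c : B) : B →ₗ[𝕜] B where
  toFun x := x * c
  map_add' x y := add_mul x y c
  map_smul' r x := smul_mul_assoc r x c

@[simp] lemma rop_apply (c x : B) : rop (𝕜 := 𝕜) c x = x * c := rfl

lemma rop_central (c : B) (a : B) :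
    (lop 𝕜 B B a).comp (rop c) = (rop c).comp (lop 𝕜 B B a) := by
  ext x; simp [mul_assoc]

lemma central_eq_rop {t : B →ₗ[𝕜] B}
    (h : ∀ a : B, (lop 𝕜 B B a).comp t = t.comp (lop 𝕜 B B a)) :
    t = rop (t 1) := by
  ext x
  have := congrArg (fun f : B →ₗ[𝕜] B => f 1) (h x)
  simpa using this.symm

private lemma genBi_rop_left {T : Set (B →ₗ[𝕜] B)} (c : B)
    (hT : ∀ t ∈ T, (rop (𝕜 := 𝕜) c) ∘ₗ t ∈ T) {φ : B →ₗ[𝕜] B} (h : φ ∈ genBi 𝕜 B B T) :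
    (rop (𝕜 := 𝕜) c) ∘ₗ φ ∈ genBi 𝕜 B B T := by
  induction h using AddSubgroup.closure_induction with
  | mem ψ hψ =>
    obtain ⟨a, b, t, ht, rfl⟩ := hψ
    apply AddSubgroup.subset_closure
    exact ⟨a, b, (rop c) ∘ₗ t, hT t ht, by ext x; simp [mul_assoc]⟩
  | zero => simpa using (genBi 𝕜 B B T).zero_mem
  | add x y _ _ hx hy => simpa [LinearMap.comp_add] using (genBi 𝕜 B B T).add_mem hx hy
  | neg x _ hx => simpa [LinearMap.comp_neg] using (genBi 𝕜 B B T).neg_mem hx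

private lemma genBi_rop_right {T : Set (B →ₗ[𝕜] B)} (c : B)
    (hT : ∀ t ∈ T, t ∘ₗ (rop (𝕜 := 𝕜) c) ∈ T) {φ : B →ₗ[𝕜] B} (h : φ ∈ genBi 𝕜 B B T) :
    φ ∘ₗ (rop (𝕜 := 𝕜) c) ∈ genBi 𝕜 B B T := by
  induction h using AddSubgroup.closure_induction with
  | mem ψ hψ =>
    obtain ⟨a, b, t, ht, rfl⟩ := hψ
    apply AddSubgroup.subset_closure
    exact ⟨a, b, t ∘ₗ (rop c), hT t ht, by ext x; simp [mul_assoc]⟩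
  | zero => simpa using (genBi 𝕜 B B T).zero_mem
  | add x y _ _ hx hy => simpa [LinearMap.add_comp] using (genBi 𝕜 B B T).add_mem hx hy
  | neg x _ hx => simpa [LinearMap.neg_comp] using (genBi 𝕜 B B T).neg_mem hx

lemma rop_comp_mem_Dfil (m : ℕ) (c : B) {φ : B →ₗ[𝕜] B} (h : φ ∈ Dfil 𝕜 B B m) :
    (rop (𝕜 := 𝕜) c) ∘ₗ φ ∈ Dfil 𝕜 B B m ∧ φ ∘ₗ (rop (𝕜 := 𝕜) c) ∈ Dfil 𝕜 B B m := by
  induction m generalizing φ with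
  | zero =>
    constructor
    · refine genBi_rop_left c (fun t ht => ?_) h
      simp only [Set.mem_setOf_eq] at ht ⊢
      intro a
      ext x
      have h1 : t (a*x) = a * t x := by
        have := congrArg (fun f : B →ₗ[𝕜] B => f x) (ht a); simpa using this.symm
      simp [h1, mul_assoc]
    · refine genBi_rop_right c (fun t ht => ?_) h
      simp only [Set.mem_setOf_eq] at ht ⊢
      intro a
      ext x
      have h1 : ∀ y, t (a*y) = a * t y := by
        intro y
        have := congrArg (fun f : B →ₗ[𝕜] B => f y) (ht a); simpa using this.symm
      simp [h1, mul_assoc]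
  | succ m ih =>
    constructor
    · refine genBi_rop_left c (fun t ht => ?_) h
      simp only [Set.mem_setOf_eq] at ht ⊢
      intro a
      have : (lop 𝕜 B B a).comp ((rop (𝕜 := 𝕜) c) ∘ₗ t) - ((rop (𝕜 := 𝕜) c) ∘ₗ t).comp (lop 𝕜 B B a)
          = (rop (𝕜 := 𝕜) c) ∘ₗ ((lop 𝕜 B B a).comp t - t.comp (lop 𝕜 B B a)) := by
        ext x; simp [mul_assoc, sub_mul, mul_sub]
      rw [this]
      exact (ih (ht a)).1
    · refine genBi_rop_right c (fun t ht => ?_) h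
      simp only [Set.mem_setOf_eq] at ht ⊢
      intro a
      have : (lop 𝕜 B B a).comp (t ∘ₗ (rop (𝕜 := 𝕜) c)) - (t ∘ₗ (rop (𝕜 := 𝕜) c)).comp (lop 𝕜 B B a)
          = ((lop 𝕜 B B a).comp t - t.comp (lop 𝕜 B B a)) ∘ₗ (rop (𝕜 := 𝕜) c) := by
        ext x; simp [mul_assoc, sub_mul, mul_sub]
      rw [this]
      exact (ih (ht a)).2

/-- composition with a `Dfil 0` element preserves the level -/
lemma Dfil_zero_comp (m : ℕ) {φ ψ : B →ₗ[𝕜] B} (hφ : φ ∈ Dfil 𝕜 B B 0)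
    (hψ : ψ ∈ Dfil 𝕜 B B m) : φ ∘ₗ ψ ∈ Dfil 𝕜 B B m ∧ ψ ∘ₗ φ ∈ Dfil 𝕜 B B m := by
  induction hφ using AddSubgroup.closure_induction with
  | mem χ hχ =>
    obtain ⟨a, b, t, ht, rfl⟩ := hχ
    rw [central_eq_rop ht]
    constructor
    · have : ((lop 𝕜 B B a).comp ((rop (t 1)) ∘ₗ (lop 𝕜 B B b))) ∘ₗ ψ
          = (lop 𝕜 B B a) ∘ₗ ((rop (𝕜 := 𝕜) (t 1)) ∘ₗ ((lop 𝕜 B B b) ∘ₗ ψ ∘ₗ (lop 𝕜 B B 1))) ∘ₗ (lop 𝕜 B B 1) := by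
        ext x; simp [mul_assoc, sub_mul, mul_sub]
      rw [this]
      exact lop_comp_mem_Dfil m a 1
        ((rop_comp_mem_Dfil m (t 1) (lop_comp_mem_Dfil m b 1 hψ)).1)
    · have : ψ ∘ₗ ((lop 𝕜 B B a).comp ((rop (t 1)) ∘ₗ (lop 𝕜 B B b)))
          = (lop 𝕜 B B 1) ∘ₗ (((lop 𝕜 B B 1) ∘ₗ ψ ∘ₗ (lop 𝕜 B B a)) ∘ₗ (rop (𝕜 := 𝕜) (t 1))) ∘ₗ (lop 𝕜 B B b) := by
        ext x; simp [mul_assoc, sub_mul, mul_sub]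
      rw [this]
      exact lop_comp_mem_Dfil m 1 b
        ((rop_comp_mem_Dfil m (t 1) (lop_comp_mem_Dfil m 1 a hψ)).2)
  | zero =>
    constructor <;> simpa using (Dfil 𝕜 B B m).zero_mem
  | add x y _ _ hx hy =>
    exact ⟨by simpa [LinearMap.add_comp] using (Dfil 𝕜 B B m).add_mem hx.1 hy.1,
      by simpa [LinearMap.comp_add] using (Dfil 𝕜 B B m).add_mem hx.2 hy.2⟩
  | neg x _ hx =>
    exact ⟨by simpa [LinearMap.neg_comp] using (Dfil 𝕜 B B m).neg_mem hx.1,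
      by simpa [LinearMap.comp_neg] using (Dfil 𝕜 B B m).neg_mem hx.2⟩

end ASide
section CSide

variable {𝕜 S : Type*} [Field 𝕜] [CommRing S] [Algebra 𝕜 S]

private def commSet (m : ℕ) : AddSubgroup (S →ₗ[𝕜] S) where
  carrier := {g | ∀ r : S, (lop 𝕜 S S r) ∘ₗ g - g ∘ₗ (lop 𝕜 S S r) ∈ Dfil 𝕜 S S m}
  zero_mem' := by intro r; simpa using (Dfil 𝕜 S S m).zero_mem
  add_mem' := by
    intro g h hg hh r
    have : (lop 𝕜 S S r) ∘ₗ (g + h) - (g + h) ∘ₗ (lop 𝕜 S S r)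
        = ((lop 𝕜 S S r) ∘ₗ g - g ∘ₗ (lop 𝕜 S S r)) + ((lop 𝕜 S S r) ∘ₗ h - h ∘ₗ (lop 𝕜 S S r)) := by
      ext x; simp [mul_add]; ring
    rw [this]; exact (Dfil 𝕜 S S m).add_mem (hg r) (hh r)
  neg_mem' := by
    intro g hg r
    have : (lop 𝕜 S S r) ∘ₗ (-g) - (-g) ∘ₗ (lop 𝕜 S S r)
        = -((lop 𝕜 S S r) ∘ₗ g - g ∘ₗ (lop 𝕜 S S r)) := by
      ext x; simp; ring
    rw [this]; exact (Dfil 𝕜 S S m).neg_mem (hg r)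

lemma comm_mem_of_mem_DfilC_succ {m : ℕ} {g : S →ₗ[𝕜] S} (hg : g ∈ Dfil 𝕜 S S (m+1)) :
    ∀ r : S, (lop 𝕜 S S r) ∘ₗ g - g ∘ₗ (lop 𝕜 S S r) ∈ Dfil 𝕜 S S m := by
  have : Dfil 𝕜 S S (m+1) ≤ commSet m := by
    refine genBi_le ?_
    intro s s' t ht
    simp only [Set.mem_setOf_eq] at ht
    intro r
    have key : (lop 𝕜 S S r) ∘ₗ ((lop 𝕜 S S s) ∘ₗ t ∘ₗ (lop 𝕜 S S s'))
        - ((lop 𝕜 S S s) ∘ₗ t ∘ₗ (lop 𝕜 S S s')) ∘ₗ (lop 𝕜 S S r)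
        = (lop 𝕜 S S s) ∘ₗ ((lop 𝕜 S S r) ∘ₗ t - t ∘ₗ (lop 𝕜 S S r)) ∘ₗ (lop 𝕜 S S s') := by
      ext x
      simp only [LinearMap.comp_apply, LinearMap.sub_apply, lopB_apply, mul_sub]
      rw [mul_left_comm r s, mul_left_comm s' r]
    rw [key]
    exact lop_comp_mem_Dfil m s s' (ht r)
  exact this hg

lemma DfilC_zero_comm {g : S →ₗ[𝕜] S} (hg : g ∈ Dfil 𝕜 S S 0) :
    ∀ r : S, (lop 𝕜 S S r) ∘ₗ g = g ∘ₗ (lop 𝕜 S S r) := by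
  intro r
  induction hg using AddSubgroup.closure_induction with
  | mem ψ hψ =>
    obtain ⟨s, s', t, ht, rfl⟩ := hψ
    simp only [Set.mem_setOf_eq] at ht
    ext x
    have h1 : ∀ y, t (r*y) = r * t y := by
      intro y
      have := congrArg (fun f : S →ₗ[𝕜] S => f y) (ht r); simpa using this.symm
    simp only [LinearMap.comp_apply, lopB_apply]
    rw [mul_left_comm s' r, h1, mul_left_comm]
  | zero => ext x; simp
  | add x y _ _ hx hy =>
    ext z
    have h1 := congrArg (fun f : S →ₗ[𝕜] S => f z) hx
    have h2 := congrArg (fun f : S →ₗ[𝕜] S => f z) hy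
    simp only [LinearMap.comp_apply, LinearMap.add_apply, lopB_apply, mul_add] at *
    rw [h1, h2]
  | neg x _ hx =>
    ext z
    have h1 := congrArg (fun f : S →ₗ[𝕜] S => f z) hx
    simp only [LinearMap.comp_apply, LinearMap.neg_apply, lopB_apply, mul_neg] at *
    rw [h1]

lemma ropC_eq_lop (c : S) : rop (𝕜 := 𝕜) c = lop 𝕜 S S c := by
  ext x; simp [mul_comm]

lemma DfilC_zero_eq_lop {g : S →ₗ[𝕜] S} (hg : g ∈ Dfil 𝕜 S S 0) :
    g = lop 𝕜 S S (g 1) := by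
  rw [← ropC_eq_lop]
  exact central_eq_rop (DfilC_zero_comm hg)

lemma lop_mem_DfilC_zero (s : S) : lop 𝕜 S S s ∈ Dfil 𝕜 S S 0 := by
  apply mem_Dfil_zero_of_central
  intro r
  ext x; simp [mul_left_comm]

lemma DfilC_comp_aux : ∀ p m n, m + n ≤ p → ∀ {g h : S →ₗ[𝕜] S}, g ∈ Dfil 𝕜 S S m →
    h ∈ Dfil 𝕜 S S n → g ∘ₗ h ∈ Dfil 𝕜 S S (m+n) := by
  intro p
  induction p with
  | zero =>
    intro m n hmn g h hg hh
    obtain ⟨rfl, rfl⟩ : m = 0 ∧ n = 0 := by omega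
    rw [DfilC_zero_eq_lop hg]
    have : lop 𝕜 S S (g 1) ∘ₗ h = (lop 𝕜 S S (g 1)) ∘ₗ h ∘ₗ (lop 𝕜 S S 1) := by
      rw [lop_one]; simp
    rw [this]
    exact lop_comp_mem_Dfil 0 _ _ hh
  | succ p ih =>
    intro m n hmn g h hg hh
    match m, n with
    | 0, n =>
      rw [DfilC_zero_eq_lop hg]
      have : lop 𝕜 S S (g 1) ∘ₗ h = (lop 𝕜 S S (g 1)) ∘ₗ h ∘ₗ (lop 𝕜 S S 1) := by
        rw [lop_one]; simp
      rw [this, Nat.zero_add]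
      exact lop_comp_mem_Dfil n _ _ hh
    | (m+1), 0 =>
      rw [DfilC_zero_eq_lop hh]
      have : g ∘ₗ lop 𝕜 S S (h 1) = (lop 𝕜 S S 1) ∘ₗ g ∘ₗ (lop 𝕜 S S (h 1)) := by
        rw [lop_one]; simp
      rw [this]
      exact lop_comp_mem_Dfil (m+1+0) _ _ hg
    | (m+1), (n+1) =>
      apply mem_Dfil_succ_of_comm
      intro r
      have key : (lop 𝕜 S S r) ∘ₗ (g ∘ₗ h) - (g ∘ₗ h) ∘ₗ (lop 𝕜 S S r)
          = ((lop 𝕜 S S r) ∘ₗ g - g ∘ₗ (lop 𝕜 S S r)) ∘ₗ h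
            + g ∘ₗ ((lop 𝕜 S S r) ∘ₗ h - h ∘ₗ (lop 𝕜 S S r)) := by
        ext x; simp
      rw [key]
      have h1 : ((lop 𝕜 S S r) ∘ₗ g - g ∘ₗ (lop 𝕜 S S r)) ∘ₗ h ∈ Dfil 𝕜 S S (m + (n+1)) :=
        ih m (n+1) (by omega) (comm_mem_of_mem_DfilC_succ hg r) hh
      have h2 : g ∘ₗ ((lop 𝕜 S S r) ∘ₗ h - h ∘ₗ (lop 𝕜 S S r)) ∈ Dfil 𝕜 S S ((m+1) + n) :=
        ih (m+1) n (by omega) hg (comm_mem_of_mem_DfilC_succ hh r)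
      apply (Dfil 𝕜 S S ((m+1)+n)).add_mem
      · exact Dfil_mono (show m + (n+1) ≤ (m+1)+n by omega) h1
      · exact Dfil_mono (show (m+1) + n ≤ (m+1)+n by omega) h2

lemma DfilC_comp {m n : ℕ} {g h : S →ₗ[𝕜] S} (hg : g ∈ Dfil 𝕜 S S m)
    (hh : h ∈ Dfil 𝕜 S S n) : g ∘ₗ h ∈ Dfil 𝕜 S S (m+n) :=
  DfilC_comp_aux (m+n) m n le_rfl hg hh

end CSide
section Main

variable {k R A : Type*} [Field k] [CommRing R] [Algebra k R] [Ring A] [Algebra R A]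
  [Algebra k A] [IsScalarTower k R A] [SMulCommClass R k A]

variable {n : ℕ}

/-- `r ↦ r • a j` as a `k`-linear map. -/
def kap (a : Fin n → A) (j : Fin n) : R →ₗ[k] A where
  toFun r := r • a j
  map_add' r s := add_smul r s (a j)
  map_smul' c r := smul_assoc c r (a j)

@[simp] lemma kap_apply (a : Fin n → A) (j : Fin n) (r : R) :
    (kap a j : R →ₗ[k] A) r = r • a j := rfl

/-- restriction of scalars of `lam l` -/
def lamk (lam : Fin n → (A →ₗ[R] R)) (l : Fin n) : A →ₗ[k] R where
  toFun := lam l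
  map_add' := (lam l).map_add
  map_smul' c x := by
    simp only [RingHom.id_apply]
    rw [← algebraMap_smul R c x, map_smul, algebraMap_smul]

@[simp] lemma lamk_apply (lam : Fin n → (A →ₗ[R] R)) (l : Fin n) (x : A) :
    (lamk lam l : A →ₗ[k] R) x = lam l x := rfl

variable (a : Fin n → A) (lam : Fin n → (A →ₗ[R] R))

/-- matrix coefficient of an operator -/
def coord (l j : Fin n) (φ : A →ₗ[k] A) : R →ₗ[k] R :=
  (lamk lam l) ∘ₗ φ ∘ₗ (kap a j)

@[simp] lemma coord_apply (l j : Fin n) (φ : A →ₗ[k] A) (r : R) :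
    coord a lam l j φ r = lam l (φ (r • a j)) := rfl

/-- elementary lift of an operator on `R` -/
def Th (l j : Fin n) (g : R →ₗ[k] R) : A →ₗ[k] A :=
  (kap a l) ∘ₗ g ∘ₗ (lamk lam j)

@[simp] lemma Th_apply (l j : Fin n) (g : R →ₗ[k] R) (x : A) :
    Th a lam l j g x = g (lam j x) • a l := rfl

@[simp] lemma lopR_apply (r s : R) : lop k R R r s = r * s := rfl

lemma expand_mul_lam (hdual : ∀ x : A, ∑ l, lam l x • a l = x) (α y : A) (l : Fin n) :
    lam l (α * y) = ∑ l', lam l (α * a l') * lam l' y := by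
  conv_lhs => rw [← hdual y]
  rw [Finset.mul_sum, map_sum]
  refine Finset.sum_congr rfl fun l' _ => ?_
  rw [mul_smul_comm, map_smul, smul_eq_mul, mul_comm]

lemma expand_smul_arg (hdual : ∀ x : A, ∑ l, lam l x • a l = x) (β : A) (j : Fin n) (r : R) :
    β * (r • a j) = ∑ j', (lam j' (β * a j) * r) • a j' := by
  rw [mul_smul_comm]
  conv_lhs => rw [← hdual (β * a j)]
  rw [Finset.smul_sum]
  refine Finset.sum_congr rfl fun j' _ => ?_
  rw [smul_smul, mul_comm]

/-- operators all of whose matrix coefficients lie in level `m` over `R` -/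
private def coordGrp (m : ℕ) : AddSubgroup (A →ₗ[k] A) where
  carrier := {φ | ∀ l j, coord a lam l j φ ∈ Dfil k R R m}
  zero_mem' := by
    intro l j
    have : coord a lam l j (0 : A →ₗ[k] A) = 0 := by ext r; simp
    rw [this]; exact (Dfil k R R m).zero_mem
  add_mem' := by
    intro φ ψ hφ hψ l j
    have : coord a lam l j (φ + ψ) = coord a lam l j φ + coord a lam l j ψ := by
      ext r; simp
    rw [this]; exact (Dfil k R R m).add_mem (hφ l j) (hψ l j)
  neg_mem' := by
    intro φ hφ l j
    have : coord a lam l j (-φ) = -(coord a lam l j φ) := by ext r; simp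
    rw [this]; exact (Dfil k R R m).neg_mem (hφ l j)

lemma coord_gen (hdual : ∀ x : A, ∑ l, lam l x • a l = x) (α β : A) (t : A →ₗ[k] A)
    (l j : Fin n) :
    coord a lam l j ((lop k A A α) ∘ₗ t ∘ₗ (lop k A A β))
      = ∑ l', ∑ j', (lop k R R (lam l (α * a l'))) ∘ₗ (coord a lam l' j' t)
          ∘ₗ (lop k R R (lam j' (β * a j))) := by
  ext r
  simp only [coord_apply, LinearMap.comp_apply, lopB_apply, LinearMap.sum_apply, lopR_apply]
  rw [expand_smul_arg a lam hdual β j r, map_sum]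
  rw [Finset.mul_sum, map_sum]
  rw [Finset.sum_comm]
  refine Finset.sum_congr rfl fun j' _ => ?_
  rw [expand_mul_lam a lam hdual α _ l]

lemma claim1 (hdual : ∀ x : A, ∑ l, lam l x • a l = x) :
    ∀ m : ℕ, ∀ φ ∈ Dfil k A A m, ∀ l j, coord a lam l j φ ∈ Dfil k R R m := by
  intro m
  induction m with
  | zero =>
    intro φ hφ
    refine genBi_le (H := coordGrp a lam 0) ?_ hφ
    intro α β t ht
    simp only [Set.mem_setOf_eq] at ht
    intro l j
    rw [coord_gen a lam hdual α β t l j]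
    apply AddSubgroup.sum_mem
    intro l' _
    apply AddSubgroup.sum_mem
    intro j' _
    have hco : coord a lam l' j' t = lop k R R (lam l' (a j' * t 1)) := by
      ext r
      simp only [coord_apply, lopR_apply]
      have hr : r • a j' = (algebraMap R A r) * a j' := by rw [← Algebra.smul_def]
      have h2 : t ((algebraMap R A r) * a j') = (algebraMap R A r) * t (a j') := by
        have := congrArg (fun f : A →ₗ[k] A => f (a j')) (ht (algebraMap R A r))
        simpa using this.symm
      have h3 : t (a j') = a j' * t 1 := by
        have := congrArg (fun f : A →ₗ[k] A => f 1) (ht (a j'))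
        simpa using this.symm
      rw [hr, h2, h3, ← Algebra.smul_def, map_smul, smul_eq_mul, mul_comm]
    rw [hco]
    have heq : (lop k R R (lam l (α * a l'))) ∘ₗ (lop k R R (lam l' (a j' * t 1)))
          ∘ₗ (lop k R R (lam j' (β * a j)))
        = lop k R R (lam l (α * a l') * (lam l' (a j' * t 1) * lam j' (β * a j))) := by
      ext x; simp [mul_assoc]
    rw [heq]
    exact lop_mem_DfilC_zero _
  | succ m ih =>
    intro φ hφ
    refine genBi_le (H := coordGrp a lam (m+1)) ?_ hφ
    intro α β t ht
    simp only [Set.mem_setOf_eq] at ht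
    intro l j
    rw [coord_gen a lam hdual α β t l j]
    apply AddSubgroup.sum_mem
    intro l' _
    apply AddSubgroup.sum_mem
    intro j' _
    have hco : coord a lam l' j' t ∈ Dfil k R R (m+1) := by
      apply mem_Dfil_succ_of_comm
      intro r
      have key : (lop k R R r) ∘ₗ (coord a lam l' j' t) - (coord a lam l' j' t) ∘ₗ (lop k R R r)
          = coord a lam l' j' ((lop k A A (algebraMap R A r)) ∘ₗ t
              - t ∘ₗ (lop k A A (algebraMap R A r))) := by
        ext s
        have e1 : (algebraMap R A r) * (s • a j') = (r * s) • a j' := by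
          rw [← Algebra.smul_def, smul_smul]
        have e2 : ∀ y : A, lam j' ((algebraMap R A r) * y) = r * lam j' y := by
          intro y
          rw [← Algebra.smul_def, map_smul, smul_eq_mul]
        simp only [LinearMap.sub_apply, LinearMap.comp_apply, coord_apply, lopR_apply,
          lopB_apply, map_sub, e1]
        rw [← Algebra.smul_def]
        rw [show (lam l') ((r • t (s • a j'))) = r * lam l' (t (s • a j')) from by
          rw [map_smul, smul_eq_mul]]
      rw [key]
      exact ih _ (ht (algebraMap R A r)) l' j'
    exact lop_comp_mem_Dfil (m+1) _ _ hco

end Main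
section Main2

variable {k R A : Type*} [Field k] [CommRing R] [Algebra k R] [Ring A] [Algebra R A]
  [Algebra k A] [IsScalarTower k R A] [SMulCommClass R k A]
variable {n : ℕ} (a : Fin n → A) (lam : Fin n → (A →ₗ[R] R))

/-- `r ↦ r • a j` as an `R`-linear map -/
def kapR (j : Fin n) : R →ₗ[R] A where
  toFun r := r • a j
  map_add' r s := add_smul r s (a j)
  map_smul' c r := mul_smul c r (a j)

/-- the rank-one `R`-linear operator `x ↦ lam j x • a l` -/
def thR (l j : Fin n) : A →ₗ[R] A := (kapR a l) ∘ₗ (lam j)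

@[simp] lemma thR_apply (l j : Fin n) (x : A) : thR a lam l j x = lam j x • a l := rfl

/-- diagonal lift of an operator on `R` to `A` -/
def Hh (g : R →ₗ[k] R) : A →ₗ[k] A := ∑ l, Th a lam l l g

lemma Hh_apply (g : R →ₗ[k] R) (x : A) : Hh a lam g x = ∑ l, g (lam l x) • a l := by
  simp [Hh, LinearMap.sum_apply]

lemma comm_Hh (hdual : ∀ x : A, ∑ l, lam l x • a l = x) (b : A) (g : R →ₗ[k] R) :
    (lop k A A b) ∘ₗ (Hh a lam g) - (Hh a lam g) ∘ₗ (lop k A A b)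
      = ∑ l, ∑ j, Th a lam l j ((lop k R R (lam l (b * a j))) ∘ₗ g
          - g ∘ₗ (lop k R R (lam l (b * a j)))) := by
  ext x
  have hS1 : b * (Hh a lam g x) = ∑ l, ∑ j, (lam l (b * a j) * g (lam j x)) • a l := by
    rw [Hh_apply, Finset.mul_sum]
    have step1 : ∀ j : Fin n, b * (g (lam j x) • a j)
        = ∑ l, (lam l (b * a j) * g (lam j x)) • a l := by
      intro j
      rw [mul_smul_comm]
      conv_lhs => rw [← hdual (b * a j)]
      rw [Finset.smul_sum]
      refine Finset.sum_congr rfl fun l _ => ?_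
      rw [smul_smul, mul_comm]
    rw [Finset.sum_congr rfl fun j _ => step1 j, Finset.sum_comm]
  have hS2 : Hh a lam g (b * x) = ∑ l, ∑ j, g (lam l (b * a j) * lam j x) • a l := by
    rw [Hh_apply]
    refine Finset.sum_congr rfl fun l _ => ?_
    rw [expand_mul_lam a lam hdual b x l, map_sum, Finset.sum_smul]
  simp only [LinearMap.sub_apply, LinearMap.comp_apply, lopB_apply, LinearMap.sum_apply,
    Th_apply, lopR_apply, map_sub, sub_smul]
  rw [hS1, hS2, ← Finset.sum_sub_distrib]
  refine Finset.sum_congr rfl fun l _ => ?_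
  rw [← Finset.sum_sub_distrib]

/-- the lift of a level-zero operator is level zero -/
lemma Hh_zero (hdual : ∀ x : A, ∑ l, lam l x • a l = x)
    (hAZ : ∀ θ : A →ₗ[R] A, (θ.restrictScalars k : A →ₗ[k] A) ∈ Dfil k A A 0)
    {g : R →ₗ[k] R} (hg : g ∈ Dfil k R R 0) : Hh a lam g ∈ Dfil k A A 0 := by
  rw [DfilC_zero_eq_lop hg]
  have : Hh a lam (lop k R R (g 1)) = (((g 1) • (LinearMap.id : A →ₗ[R] A)).restrictScalars k) := by
    ext x
    rw [Hh_apply]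
    simp only [LinearMap.restrictScalars_apply, LinearMap.smul_apply, LinearMap.id_apply,
      lopR_apply]
    simp only [mul_smul]
    rw [← Finset.smul_sum, hdual]
  rw [this]
  exact hAZ _

end Main2
section Main3

variable {k R A : Type*} [Field k] [CommRing R] [Algebra k R] [Ring A] [Algebra R A]
  [Algebra k A] [IsScalarTower k R A] [SMulCommClass R k A]
variable {n : ℕ} (a : Fin n → A) (lam : Fin n → (A →ₗ[R] R)) (i0 : Fin n)

lemma Th_eq (h1 : a i0 = 1) (hlam1 : ∀ l, lam l 1 = if l = i0 then 1 else 0)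
    (l j : Fin n) (g : R →ₗ[k] R) :
    Th a lam l j g = (lop k A A (a l)) ∘ₗ (((thR a lam i0 i0).restrictScalars k) ∘ₗ
      ((Hh a lam g) ∘ₗ ((thR a lam i0 j).restrictScalars k))) ∘ₗ (lop k A A 1) := by
  ext x
  simp only [LinearMap.comp_apply, LinearMap.restrictScalars_apply, thR_apply, Th_apply,
    lopB_apply, one_mul, h1]
  have e1 : Hh a lam g (lam j x • (1:A)) = g (lam j x) • (1:A) := by
    rw [Hh_apply]
    rw [Finset.sum_eq_single i0]
    · rw [map_smul, hlam1 i0, if_pos rfl, smul_eq_mul, mul_one, h1]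
    · intro u _ hu
      rw [map_smul, hlam1 u, if_neg hu, smul_eq_mul, mul_zero, map_zero, zero_smul]
    · intro h; exact absurd (Finset.mem_univ i0) h
  rw [e1, mul_smul_comm, mul_one, map_smul, hlam1 i0, if_pos rfl, smul_eq_mul, mul_one]

lemma corTh (m : ℕ)
    (hAZ : ∀ θ : A →ₗ[R] A, (θ.restrictScalars k : A →ₗ[k] A) ∈ Dfil k A A 0)
    (h1 : a i0 = 1) (hlam1 : ∀ l, lam l 1 = if l = i0 then 1 else 0)
    (hH : ∀ g' ∈ Dfil k R R m, Hh a lam g' ∈ Dfil k A A m)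
    {g : R →ₗ[k] R} (hg : g ∈ Dfil k R R m) (l j : Fin n) :
    Th a lam l j g ∈ Dfil k A A m := by
  rw [Th_eq a lam i0 h1 hlam1 l j g]
  apply lop_comp_mem_Dfil
  exact (Dfil_zero_comp m (hAZ (thR a lam i0 i0))
    ((Dfil_zero_comp m (hAZ (thR a lam i0 j)) (hH g hg)).2)).1

lemma claim2 (hdual : ∀ x : A, ∑ l, lam l x • a l = x)
    (hAZ : ∀ θ : A →ₗ[R] A, (θ.restrictScalars k : A →ₗ[k] A) ∈ Dfil k A A 0)
    (h1 : a i0 = 1) (hlam1 : ∀ l, lam l 1 = if l = i0 then 1 else 0) :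
    ∀ m : ℕ, ∀ g ∈ Dfil k R R m, Hh a lam g ∈ Dfil k A A m := by
  intro m
  induction m with
  | zero => exact fun g hg => Hh_zero a lam hdual hAZ hg
  | succ m ih =>
    intro g hg
    apply mem_Dfil_succ_of_comm
    intro b
    rw [comm_Hh a lam hdual b g]
    apply AddSubgroup.sum_mem
    intro l _
    apply AddSubgroup.sum_mem
    intro j _
    exact corTh a lam i0 m hAZ h1 hlam1 ih (comm_mem_of_mem_DfilC_succ hg _) l j

lemma rec_eq (hdual : ∀ x : A, ∑ l, lam l x • a l = x) (φ : A →ₗ[k] A) :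
    φ = ∑ l, ∑ j, Th a lam l j (coord a lam l j φ) := by
  ext x
  simp only [LinearMap.sum_apply, Th_apply, coord_apply]
  rw [Finset.sum_comm]
  calc φ x = φ (∑ j, lam j x • a j) := by rw [hdual]
  _ = ∑ j, φ (lam j x • a j) := map_sum φ _ _
  _ = ∑ j, ∑ l, lam l (φ (lam j x • a j)) • a l :=
      Finset.sum_congr rfl fun j _ => (hdual _).symm

lemma coord_comp (hdual : ∀ x : A, ∑ l, lam l x • a l = x) (φ ψ : A →ₗ[k] A) (l j : Fin n) :
    coord a lam l j (φ ∘ₗ ψ) = ∑ u, (coord a lam l u φ) ∘ₗ (coord a lam u j ψ) := by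
  ext r
  simp only [coord_apply, LinearMap.comp_apply, LinearMap.sum_apply]
  conv_lhs => rw [← hdual (ψ (r • a j))]
  rw [map_sum, map_sum]

lemma compA (hdual : ∀ x : A, ∑ l, lam l x • a l = x)
    (hAZ : ∀ θ : A →ₗ[R] A, (θ.restrictScalars k : A →ₗ[k] A) ∈ Dfil k A A 0)
    (h1 : a i0 = 1) (hlam1 : ∀ l, lam l 1 = if l = i0 then 1 else 0)
    {m mm : ℕ} {φ ψ : A →ₗ[k] A} (hφ : φ ∈ Dfil k A A m) (hψ : ψ ∈ Dfil k A A mm) :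
    φ ∘ₗ ψ ∈ Dfil k A A (m + mm) := by
  rw [rec_eq a lam hdual (φ ∘ₗ ψ)]
  apply AddSubgroup.sum_mem
  intro l _
  apply AddSubgroup.sum_mem
  intro j _
  apply corTh a lam i0 (m+mm) hAZ h1 hlam1 (claim2 a lam i0 hdual hAZ h1 hlam1 (m+mm))
  rw [coord_comp a lam hdual φ ψ l j]
  apply AddSubgroup.sum_mem
  intro u _
  exact DfilC_comp (claim1 a lam hdual m φ hφ l u) (claim1 a lam hdual mm ψ hψ u j)

end Main3
section General2

variable {𝕜 B M : Type*} [Field 𝕜] [Ring B] [Algebra 𝕜 B]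
  [AddCommGroup M] [Module 𝕜 M] [Module B M] [SMulCommClass B 𝕜 M]

lemma mem_Ddiff {φ : M →ₗ[𝕜] M} : φ ∈ Ddiff 𝕜 B M ↔ ∃ m, φ ∈ Dfil 𝕜 B M m :=
  Set.mem_iUnion

lemma mem_Ddiff_of_mem {m : ℕ} {φ : M →ₗ[𝕜] M} (h : φ ∈ Dfil 𝕜 B M m) :
    φ ∈ Ddiff 𝕜 B M := mem_Ddiff.2 ⟨m, h⟩

lemma id_mem_Dfil_zero : (LinearMap.id : M →ₗ[𝕜] M) ∈ Dfil 𝕜 B M 0 :=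
  mem_Dfil_zero_of_central fun b => by ext x; simp

end General2

/-- `Ddiff` as an additive subgroup. -/
def DdiffGrp (𝕜 B M : Type*) [Field 𝕜] [Ring B] [Algebra 𝕜 B] [AddCommGroup M] [Module 𝕜 M]
    [Module B M] [SMulCommClass B 𝕜 M] : AddSubgroup (M →ₗ[𝕜] M) where
  carrier := Ddiff 𝕜 B M
  zero_mem' := mem_Ddiff_of_mem (Dfil 𝕜 B M 0).zero_mem
  add_mem' {x y} hx hy := by
    obtain ⟨m, hm⟩ := mem_Ddiff.1 hx
    obtain ⟨m', hm'⟩ := mem_Ddiff.1 hy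
    exact mem_Ddiff_of_mem ((Dfil 𝕜 B M (max m m')).add_mem
      (Dfil_mono (le_max_left m m') hm) (Dfil_mono (le_max_right m m') hm'))
  neg_mem' {x} hx := by
    obtain ⟨m, hm⟩ := mem_Ddiff.1 hx
    exact mem_Ddiff_of_mem ((Dfil 𝕜 B M m).neg_mem hm)

@[simp] lemma mem_DdiffGrp {𝕜 B M : Type*} [Field 𝕜] [Ring B] [Algebra 𝕜 B] [AddCommGroup M]
    [Module 𝕜 M] [Module B M] [SMulCommClass B 𝕜 M] {φ : M →ₗ[𝕜] M} :
    φ ∈ DdiffGrp 𝕜 B M ↔ φ ∈ Ddiff 𝕜 B M := Iff.rfl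

section Main4

variable {k R A : Type*} [Field k] [CommRing R] [Algebra k R] [Ring A] [Algebra R A]
  [Algebra k A] [IsScalarTower k R A] [SMulCommClass R k A]
variable {n : ℕ} (a : Fin n → A) (lam : Fin n → (A →ₗ[R] R)) (i0 : Fin n)

/-- restriction of an operator on `A` to `R` -/
def RES (φ : A →ₗ[k] A) : R →ₗ[k] R := coord a lam i0 i0 φ

/-- extension of an operator on `R` to `A` -/
def EXT (g : R →ₗ[k] R) : A →ₗ[k] A := Th a lam i0 i0 g

/-- the projection of `A` onto `R·1` -/
def F0 : A →ₗ[k] A := EXT a lam i0 (LinearMap.id)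

/-- `x ↦ lam l x • 1`, the `l`-th coordinate followed by the unit embedding -/
def epsk (l : Fin n) : A →ₗ[k] A := (thR a lam i0 l).restrictScalars k

@[simp] lemma RES_apply (φ : A →ₗ[k] A) (r : R) :
    RES a lam i0 φ r = lam i0 (φ (r • a i0)) := rfl

@[simp] lemma EXT_apply (g : R →ₗ[k] R) (x : A) :
    EXT a lam i0 g x = g (lam i0 x) • a i0 := rfl

@[simp] lemma epsk_apply (l : Fin n) (x : A) :
    (epsk a lam i0 l : A →ₗ[k] A) x = lam l x • a i0 := rfl

lemma tau_smul_one (hlam1 : ∀ l, lam l 1 = if l = i0 then 1 else 0) (s : R) : lam i0 (s • (1:A)) = s := by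
  rw [map_smul, hlam1 i0, if_pos rfl, smul_eq_mul, mul_one]

lemma res_ext (h1 : a i0 = 1) (hlam1 : ∀ l, lam l 1 = if l = i0 then 1 else 0) (g : R →ₗ[k] R) : RES a lam i0 (EXT a lam i0 g) = g := by
  ext r
  simp only [RES_apply, EXT_apply, h1]
  rw [tau_smul_one lam i0 hlam1, tau_smul_one lam i0 hlam1]

lemma res_comp_f0 (h1 : a i0 = 1) (hlam1 : ∀ l, lam l 1 = if l = i0 then 1 else 0) (φ ψ : A →ₗ[k] A) :
    RES a lam i0 (φ ∘ₗ (F0 a lam i0) ∘ₗ ψ)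
      = (RES a lam i0 φ) ∘ₗ (RES a lam i0 ψ) := by
  ext r
  simp only [RES_apply, LinearMap.comp_apply, F0, EXT_apply, LinearMap.id_apply, h1]

lemma res_gen (h1 : a i0 = 1) (hlam1 : ∀ l, lam l 1 = if l = i0 then 1 else 0) (d d' : A →ₗ[k] A) (g : R →ₗ[k] R) :
    RES a lam i0 (d ∘ₗ (EXT a lam i0 g) ∘ₗ d')
      = (RES a lam i0 d) ∘ₗ g ∘ₗ (RES a lam i0 d') := by
  ext r
  simp only [RES_apply, LinearMap.comp_apply, EXT_apply, h1]

lemma ext_res (h1 : a i0 = 1) (φ : A →ₗ[k] A) :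
    EXT a lam i0 (RES a lam i0 φ) = (F0 a lam i0) ∘ₗ φ ∘ₗ (F0 a lam i0) := by
  ext x
  simp only [EXT_apply, RES_apply, LinearMap.comp_apply, F0, LinearMap.id_apply, h1]

lemma ext_comp_ext (h1 : a i0 = 1) (hlam1 : ∀ l, lam l 1 = if l = i0 then 1 else 0) (g g' : R →ₗ[k] R) (h : A →ₗ[k] A) :
    (EXT a lam i0 g) ∘ₗ h ∘ₗ (EXT a lam i0 g')
      = EXT a lam i0 (g ∘ₗ (RES a lam i0 h) ∘ₗ g') := by
  ext x
  simp only [EXT_apply, RES_apply, LinearMap.comp_apply, h1]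

lemma EXT_zero : EXT a lam i0 (0 : R →ₗ[k] R) = 0 := by
  ext x; simp

lemma RES_zero : RES a lam i0 (0 : A →ₗ[k] A) = 0 := by
  ext r; simp

lemma RES_sub (φ ψ : A →ₗ[k] A) :
    RES a lam i0 (φ - ψ) = RES a lam i0 φ - RES a lam i0 ψ := by
  ext r; simp

/-- the additive-group homomorphism version of RES -/
def RESh : (A →ₗ[k] A) →+ (R →ₗ[k] R) where
  toFun := RES a lam i0
  map_zero' := RES_zero a lam i0
  map_add' φ ψ := by ext r; simp

lemma decomp_term (h1 : a i0 = 1) (hlam1 : ∀ l, lam l 1 = if l = i0 then 1 else 0) (hdual : ∀ x : A, ∑ l, lam l x • a l = x) (φ : A →ₗ[k] A) (l j : Fin n) :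
    (lop k A A (a l)) ∘ₗ (EXT a lam i0 (RES a lam i0
        ((epsk a lam i0 l) ∘ₗ φ ∘ₗ (lop k A A (a j))))) ∘ₗ (epsk a lam i0 j)
      = Th a lam l j (coord a lam l j φ) := by
  ext x
  simp only [LinearMap.comp_apply, EXT_apply, RES_apply, epsk_apply, lopB_apply, Th_apply,
    coord_apply, h1]
  simp only [tau_smul_one lam i0 hlam1]
  simp only [mul_smul_comm, mul_one]
  try simp only [tau_smul_one lam i0 hlam1]

lemma full_decomp (h1 : a i0 = 1) (hlam1 : ∀ l, lam l 1 = if l = i0 then 1 else 0) (hdual : ∀ x : A, ∑ l, lam l x • a l = x) (φ : A →ₗ[k] A) :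
    φ = ∑ l, ∑ j, (lop k A A (a l)) ∘ₗ (EXT a lam i0 (RES a lam i0
        ((epsk a lam i0 l) ∘ₗ φ ∘ₗ (lop k A A (a j))))) ∘ₗ (epsk a lam i0 j) := by
  conv_lhs => rw [rec_eq a lam hdual φ]
  exact Finset.sum_congr rfl fun l _ => Finset.sum_congr rfl fun j _ =>
    (decomp_term a lam i0 h1 hlam1 hdual φ l j).symm

end Main4
end Transfer
section Ideals

variable (k : Type*) [Field k]

/-- `I` is a two-sided ideal of the ring of differential operators `D` (a subset of
`Hom_k(M,M)` closed under composition): `I ⊆ D`, `I` is an additive subgroup, and `I` is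
closed under left and right composition with elements of `D`. -/
def IsIdealOf {M : Type*} [AddCommGroup M] [Module k M] (D I : Set (M →ₗ[k] M)) : Prop :=
  I ⊆ D ∧ (0 : M →ₗ[k] M) ∈ I ∧ (∀ a ∈ I, ∀ b ∈ I, a - b ∈ I) ∧
    ∀ d ∈ D, ∀ φ ∈ I, d.comp φ ∈ I ∧ φ.comp d ∈ I

end Ideals

section Stmt13

variable (k : Type*) [Field k]

/-- The ring of differential operators `D` is simple: its only two-sided ideals are `{0}`
and `D`. -/
def DIsSimple {M : Type*} [AddCommGroup M] [Module k M] (D : Set (M →ₗ[k] M)) : Prop :=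
  ∀ I : Set (M →ₗ[k] M), IsIdealOf k D I → I = {0} ∨ I = D

/-- The ring of differential operators `D` is Noetherian: ascending chains of two-sided
ideals stabilize. -/
def DIsNoetherian {M : Type*} [AddCommGroup M] [Module k M] (D : Set (M →ₗ[k] M)) : Prop :=
  ∀ c : ℕ → Set (M →ₗ[k] M), (∀ i, IsIdealOf k D (c i)) → (∀ i, c i ⊆ c (i + 1)) →
    ∃ N, ∀ i, N ≤ i → c i = c N

/-- The ring of differential operators `D` is prime: if `P·Q = 0` for two-sided ideals
`P, Q` with `P ≠ 0`, then `Q = 0`. -/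
def DIsPrime {M : Type*} [AddCommGroup M] [Module k M] (D : Set (M →ₗ[k] M)) : Prop :=
  ∀ P Q : Set (M →ₗ[k] M), IsIdealOf k D P → IsIdealOf k D Q →
    (∀ p ∈ P, ∀ q ∈ Q, p.comp q = 0) → P ≠ {0} → Q = {0}

namespace Transfer
section Corr

variable {k R A : Type*} [Field k] [CommRing R] [Algebra k R] [Ring A] [Algebra R A]
  [Algebra k A] [IsScalarTower k R A] [SMulCommClass R k A]
variable {n : ℕ} (a : Fin n → A) (lam : Fin n → (A →ₗ[R] R)) (i0 : Fin n)

lemma res_ext_comp (h1 : a i0 = 1) (hlam1 : ∀ l, lam l 1 = if l = i0 then 1 else 0)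
    (g : R →ₗ[k] R) (φ : A →ₗ[k] A) :
    RES a lam i0 ((EXT a lam i0 g) ∘ₗ φ) = g ∘ₗ (RES a lam i0 φ) := by
  ext r
  simp only [RES_apply, LinearMap.comp_apply, EXT_apply, h1]
  rw [tau_smul_one lam i0 hlam1]

lemma res_comp_ext (h1 : a i0 = 1) (hlam1 : ∀ l, lam l 1 = if l = i0 then 1 else 0)
    (φ : A →ₗ[k] A) (g : R →ₗ[k] R) :
    RES a lam i0 (φ ∘ₗ (EXT a lam i0 g)) = (RES a lam i0 φ) ∘ₗ g := by
  ext r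
  simp only [RES_apply, LinearMap.comp_apply, EXT_apply, h1]
  rw [tau_smul_one lam i0 hlam1]

lemma RES_add (φ ψ : A →ₗ[k] A) :
    RES a lam i0 (φ + ψ) = RES a lam i0 φ + RES a lam i0 ψ := by ext r; simp

lemma RES_neg (φ : A →ₗ[k] A) : RES a lam i0 (-φ) = -(RES a lam i0 φ) := by ext r; simp

lemma lopA_mem_Dfil_zero (b : A) : lop k A A b ∈ Dfil k A A 0 := by
  apply AddSubgroup.subset_closure
  refine ⟨b, 1, LinearMap.id, fun a' => by ext x; simp, ?_⟩
  ext x; simp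

lemma RES_mem (hdual : ∀ x : A, ∑ l, lam l x • a l = x) {φ : A →ₗ[k] A}
    (hφ : φ ∈ Ddiff k A A) : RES a lam i0 φ ∈ Ddiff k R R := by
  obtain ⟨m, hm⟩ := mem_Ddiff.1 hφ
  exact mem_Ddiff_of_mem (claim1 a lam hdual m φ hm i0 i0)

lemma EXT_mem (hdual : ∀ x : A, ∑ l, lam l x • a l = x)
    (hAZ : ∀ θ : A →ₗ[R] A, (θ.restrictScalars k : A →ₗ[k] A) ∈ Dfil k A A 0)
    (h1 : a i0 = 1) (hlam1 : ∀ l, lam l 1 = if l = i0 then 1 else 0)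
    {g : R →ₗ[k] R} (hg : g ∈ Ddiff k R R) : EXT a lam i0 g ∈ Ddiff k A A := by
  obtain ⟨m, hm⟩ := mem_Ddiff.1 hg
  exact mem_Ddiff_of_mem (corTh a lam i0 m hAZ h1 hlam1
    (claim2 a lam i0 hdual hAZ h1 hlam1 m) hm i0 i0)

lemma F0_eq_epsk : (F0 a lam i0 : A →ₗ[k] A) = epsk a lam i0 i0 := by ext x; simp [F0]

lemma F0_mem (hAZ : ∀ θ : A →ₗ[R] A, (θ.restrictScalars k : A →ₗ[k] A) ∈ Dfil k A A 0) :
    F0 a lam i0 ∈ Ddiff k A A := by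
  rw [F0_eq_epsk (k := k)]
  exact mem_Ddiff_of_mem (hAZ (thR a lam i0 i0))

lemma epsk_mem (hAZ : ∀ θ : A →ₗ[R] A, (θ.restrictScalars k : A →ₗ[k] A) ∈ Dfil k A A 0)
    (l : Fin n) : epsk a lam i0 l ∈ Ddiff k A A :=
  mem_Ddiff_of_mem (hAZ (thR a lam i0 l))

lemma id_mem_DA : (LinearMap.id : A →ₗ[k] A) ∈ Ddiff k A A :=
  mem_Ddiff_of_mem id_mem_Dfil_zero

lemma id_mem_DR : (LinearMap.id : R →ₗ[k] R) ∈ Ddiff k R R :=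
  mem_Ddiff_of_mem id_mem_Dfil_zero

lemma DA_comp (hdual : ∀ x : A, ∑ l, lam l x • a l = x)
    (hAZ : ∀ θ : A →ₗ[R] A, (θ.restrictScalars k : A →ₗ[k] A) ∈ Dfil k A A 0)
    (h1 : a i0 = 1) (hlam1 : ∀ l, lam l 1 = if l = i0 then 1 else 0)
    {φ ψ : A →ₗ[k] A} (hφ : φ ∈ Ddiff k A A) (hψ : ψ ∈ Ddiff k A A) :
    φ ∘ₗ ψ ∈ Ddiff k A A := by
  obtain ⟨m, hm⟩ := mem_Ddiff.1 hφ
  obtain ⟨m', hm'⟩ := mem_Ddiff.1 hψ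
  exact mem_Ddiff_of_mem (compA a lam i0 hdual hAZ h1 hlam1 hm hm')

lemma DR_comp {g h : R →ₗ[k] R} (hg : g ∈ Ddiff k R R) (hh : h ∈ Ddiff k R R) :
    g ∘ₗ h ∈ Ddiff k R R := by
  obtain ⟨m, hm⟩ := mem_Ddiff.1 hg
  obtain ⟨m', hm'⟩ := mem_Ddiff.1 hh
  exact mem_Ddiff_of_mem (DfilC_comp hm hm')

/-- a two-sided ideal as an additive subgroup -/
private def idealGrp {M : Type*} [AddCommGroup M] [Module k M] {D I : Set (M →ₗ[k] M)}
    (hI : IsIdealOf k D I) : AddSubgroup (M →ₗ[k] M) where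
  carrier := I
  zero_mem' := hI.2.1
  add_mem' {x y} hx hy := by
    have h0y : (0 : M →ₗ[k] M) - y ∈ I := hI.2.2.1 0 hI.2.1 y hy
    have hxy := hI.2.2.1 x hx _ h0y
    simpa [zero_sub, sub_neg_eq_add] using hxy
  neg_mem' {x} hx := by simpa [zero_sub] using hI.2.2.1 0 hI.2.1 x hx

@[simp] private lemma mem_idealGrp {M : Type*} [AddCommGroup M] [Module k M]
    {D I : Set (M →ₗ[k] M)} (hI : IsIdealOf k D I) {x : M →ₗ[k] M} :
    x ∈ idealGrp hI ↔ x ∈ I := Iff.rfl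

/-- the pushforward of an ideal of `D(A)` to `D(R)` -/
def PhiI (I : Set (A →ₗ[k] A)) : Set (R →ₗ[k] R) := (RES a lam i0) '' I

/-- generators for the pushforward of an ideal of `D(R)` to `D(A)` -/
def PsiGen (J : Set (R →ₗ[k] R)) : Set (A →ₗ[k] A) :=
  {χ | ∃ d ∈ Ddiff k A A, ∃ d' ∈ Ddiff k A A, ∃ g ∈ J, χ = d ∘ₗ (EXT a lam i0 g) ∘ₗ d'}

/-- the pushforward of an ideal of `D(R)` to `D(A)` -/
def PsiI (J : Set (R →ₗ[k] R)) : Set (A →ₗ[k] A) :=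
  (AddSubgroup.closure (PsiGen a lam i0 J) : AddSubgroup (A →ₗ[k] A))

lemma DA_ideal_self (hdual : ∀ x : A, ∑ l, lam l x • a l = x)
    (hAZ : ∀ θ : A →ₗ[R] A, (θ.restrictScalars k : A →ₗ[k] A) ∈ Dfil k A A 0)
    (h1 : a i0 = 1) (hlam1 : ∀ l, lam l 1 = if l = i0 then 1 else 0) :
    IsIdealOf k (Ddiff k A A) (Ddiff k A A) := by
  refine ⟨subset_rfl, (DdiffGrp k A A).zero_mem, fun x hx y hy => (DdiffGrp k A A).sub_mem hx hy,
    fun d hd φ hφ => ⟨DA_comp a lam i0 hdual hAZ h1 hlam1 hd hφ,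
      DA_comp a lam i0 hdual hAZ h1 hlam1 hφ hd⟩⟩

lemma DR_ideal_self : IsIdealOf k (Ddiff k R R) (Ddiff k R R) :=
  ⟨subset_rfl, (DdiffGrp k R R).zero_mem, fun x hx y hy => (DdiffGrp k R R).sub_mem hx hy,
    fun d hd φ hφ => ⟨DR_comp hd hφ, DR_comp hφ hd⟩⟩

lemma PhiI_ideal (hdual : ∀ x : A, ∑ l, lam l x • a l = x)
    (hAZ : ∀ θ : A →ₗ[R] A, (θ.restrictScalars k : A →ₗ[k] A) ∈ Dfil k A A 0)
    (h1 : a i0 = 1) (hlam1 : ∀ l, lam l 1 = if l = i0 then 1 else 0)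
    {I : Set (A →ₗ[k] A)} (hI : IsIdealOf k (Ddiff k A A) I) :
    IsIdealOf k (Ddiff k R R) (PhiI a lam i0 I) := by
  obtain ⟨hID, hI0, hIsub, hIcomp⟩ := hI
  refine ⟨?_, ⟨0, hI0, RES_zero a lam i0⟩, ?_, ?_⟩
  · rintro _ ⟨φ, hφ, rfl⟩
    exact RES_mem a lam i0 hdual (hID hφ)
  · rintro _ ⟨φ, hφ, rfl⟩ _ ⟨ψ, hψ, rfl⟩
    exact ⟨φ - ψ, hIsub φ hφ ψ hψ, by ext r; simp⟩
  · rintro d hd _ ⟨φ, hφ, rfl⟩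
    constructor
    · refine ⟨(EXT a lam i0 d) ∘ₗ φ,
        (hIcomp _ (EXT_mem a lam i0 hdual hAZ h1 hlam1 hd) φ hφ).1, ?_⟩
      exact res_ext_comp a lam i0 h1 hlam1 d φ
    · refine ⟨φ ∘ₗ (EXT a lam i0 d),
        (hIcomp _ (EXT_mem a lam i0 hdual hAZ h1 hlam1 hd) φ hφ).2, ?_⟩
      exact res_comp_ext a lam i0 h1 hlam1 φ d

/-- `f ↦ d ∘ f` as an additive monoid hom -/
private def compLh {M : Type*} [AddCommGroup M] [Module k M] (d : M →ₗ[k] M) :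
    (M →ₗ[k] M) →+ (M →ₗ[k] M) where
  toFun f := d ∘ₗ f
  map_zero' := by ext x; simp
  map_add' f g := by ext x; simp

/-- `f ↦ f ∘ d` as an additive monoid hom -/
private def compRh {M : Type*} [AddCommGroup M] [Module k M] (d : M →ₗ[k] M) :
    (M →ₗ[k] M) →+ (M →ₗ[k] M) where
  toFun f := f ∘ₗ d
  map_zero' := by ext x; simp
  map_add' f g := by ext x; simp

lemma PsiI_subset_DA (hdual : ∀ x : A, ∑ l, lam l x • a l = x)
    (hAZ : ∀ θ : A →ₗ[R] A, (θ.restrictScalars k : A →ₗ[k] A) ∈ Dfil k A A 0)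
    (h1 : a i0 = 1) (hlam1 : ∀ l, lam l 1 = if l = i0 then 1 else 0)
    {J : Set (R →ₗ[k] R)} (hJD : J ⊆ Ddiff k R R) :
    PsiI a lam i0 J ⊆ Ddiff k A A := by
  intro χ hχ
  have : AddSubgroup.closure (PsiGen a lam i0 J) ≤ DdiffGrp k A A := by
    apply (AddSubgroup.closure_le _).2
    rintro _ ⟨d, hd, d', hd', g, hg, rfl⟩
    exact DA_comp a lam i0 hdual hAZ h1 hlam1 hd
      (DA_comp a lam i0 hdual hAZ h1 hlam1
        (EXT_mem a lam i0 hdual hAZ h1 hlam1 (hJD hg)) hd')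
  exact this hχ

lemma PsiI_ideal (hdual : ∀ x : A, ∑ l, lam l x • a l = x)
    (hAZ : ∀ θ : A →ₗ[R] A, (θ.restrictScalars k : A →ₗ[k] A) ∈ Dfil k A A 0)
    (h1 : a i0 = 1) (hlam1 : ∀ l, lam l 1 = if l = i0 then 1 else 0)
    {J : Set (R →ₗ[k] R)} (hJ : IsIdealOf k (Ddiff k R R) J) :
    IsIdealOf k (Ddiff k A A) (PsiI a lam i0 J) := by
  refine ⟨PsiI_subset_DA a lam i0 hdual hAZ h1 hlam1 hJ.1,
    (AddSubgroup.closure (PsiGen a lam i0 J)).zero_mem,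
    fun x hx y hy => (AddSubgroup.closure (PsiGen a lam i0 J)).sub_mem hx hy, ?_⟩
  intro d hd χ hχ
  constructor
  · have : AddSubgroup.closure (PsiGen a lam i0 J)
        ≤ (AddSubgroup.closure (PsiGen a lam i0 J)).comap (compLh d) := by
      apply (AddSubgroup.closure_le _).2
      rintro _ ⟨e, he, e', he', g, hg, rfl⟩
      apply AddSubgroup.subset_closure
      refine ⟨d ∘ₗ e, DA_comp a lam i0 hdual hAZ h1 hlam1 hd he, e', he', g, hg, ?_⟩
      simp only [compLh, AddMonoidHom.coe_mk, ZeroHom.coe_mk, LinearMap.comp_assoc]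
    exact this hχ
  · have : AddSubgroup.closure (PsiGen a lam i0 J)
        ≤ (AddSubgroup.closure (PsiGen a lam i0 J)).comap (compRh d) := by
      apply (AddSubgroup.closure_le _).2
      rintro _ ⟨e, he, e', he', g, hg, rfl⟩
      apply AddSubgroup.subset_closure
      refine ⟨e, he, e' ∘ₗ d, DA_comp a lam i0 hdual hAZ h1 hlam1 he' hd, g, hg, ?_⟩
      simp only [compRh, AddMonoidHom.coe_mk, ZeroHom.coe_mk, LinearMap.comp_assoc]
    exact this hχ

lemma PhiI_PsiI (h1 : a i0 = 1) (hlam1 : ∀ l, lam l 1 = if l = i0 then 1 else 0)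
    (hdual : ∀ x : A, ∑ l, lam l x • a l = x)
    {J : Set (R →ₗ[k] R)} (hJ : IsIdealOf k (Ddiff k R R) J) :
    PhiI a lam i0 (PsiI a lam i0 J) = J := by
  apply Set.Subset.antisymm
  · rintro _ ⟨χ, hχ, rfl⟩
    have hχ' : χ ∈ AddSubgroup.closure (PsiGen a lam i0 J) := hχ
    clear hχ
    induction hχ' using AddSubgroup.closure_induction with
    | mem ψ hψ =>
      obtain ⟨d, hd, d', hd', g, hg, rfl⟩ := hψ
      rw [res_gen a lam i0 h1 hlam1 d d' g]
      exact (hJ.2.2.2 _ (RES_mem a lam i0 hdual hd) _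
        ((hJ.2.2.2 _ (RES_mem a lam i0 hdual hd') g hg).2)).1
    | zero =>
      rw [RES_zero]
      exact hJ.2.1
    | add x y _ _ px py =>
      rw [RES_add]
      exact (idealGrp hJ).add_mem px py
    | neg x _ px =>
      rw [RES_neg]
      exact (idealGrp hJ).neg_mem px
  · intro g hg
    refine ⟨EXT a lam i0 g, ?_, res_ext a lam i0 h1 hlam1 g⟩
    apply AddSubgroup.subset_closure
    exact ⟨LinearMap.id, id_mem_DA, LinearMap.id, id_mem_DA, g, hg, by ext x; simp⟩

lemma PsiI_PhiI (hdual : ∀ x : A, ∑ l, lam l x • a l = x)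
    (hAZ : ∀ θ : A →ₗ[R] A, (θ.restrictScalars k : A →ₗ[k] A) ∈ Dfil k A A 0)
    (h1 : a i0 = 1) (hlam1 : ∀ l, lam l 1 = if l = i0 then 1 else 0)
    {I : Set (A →ₗ[k] A)} (hI : IsIdealOf k (Ddiff k A A) I) :
    PsiI a lam i0 (PhiI a lam i0 I) = I := by
  apply Set.Subset.antisymm
  · intro χ hχ
    have hle : AddSubgroup.closure (PsiGen a lam i0 (PhiI a lam i0 I)) ≤ idealGrp hI := by
      apply (AddSubgroup.closure_le _).2
      rintro _ ⟨d, hd, d', hd', _, ⟨φ, hφ, rfl⟩, rfl⟩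
      have key : d ∘ₗ (EXT a lam i0 (RES a lam i0 φ)) ∘ₗ d'
          = (d ∘ₗ (F0 a lam i0)) ∘ₗ (φ ∘ₗ ((F0 a lam i0) ∘ₗ d')) := by
        rw [ext_res a lam i0 h1 φ]; ext x; simp
      have : d ∘ₗ (EXT a lam i0 (RES a lam i0 φ)) ∘ₗ d' ∈ I := by
        rw [key]
        exact (hI.2.2.2 _ (DA_comp a lam i0 hdual hAZ h1 hlam1 hd (F0_mem a lam i0 hAZ)) _
          ((hI.2.2.2 _ (DA_comp a lam i0 hdual hAZ h1 hlam1 (F0_mem a lam i0 hAZ) hd')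
            φ hφ).2)).1
      exact this
    exact hle hχ
  · intro φ hφ
    have hde := full_decomp a lam i0 h1 hlam1 hdual φ
    have : ∑ l, ∑ j, (lop k A A (a l)) ∘ₗ (EXT a lam i0 (RES a lam i0
        ((epsk a lam i0 l) ∘ₗ φ ∘ₗ (lop k A A (a j))))) ∘ₗ (epsk a lam i0 j)
          ∈ PsiI a lam i0 (PhiI a lam i0 I) := by
      apply AddSubgroup.sum_mem
      intro l _
      apply AddSubgroup.sum_mem
      intro j _
      apply AddSubgroup.subset_closure
      refine ⟨lop k A A (a l), mem_Ddiff_of_mem (lopA_mem_Dfil_zero (a l)),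
        epsk a lam i0 j, epsk_mem a lam i0 hAZ j,
        RES a lam i0 ((epsk a lam i0 l) ∘ₗ φ ∘ₗ (lop k A A (a j))), ?_, rfl⟩
      refine ⟨(epsk a lam i0 l) ∘ₗ φ ∘ₗ (lop k A A (a j)), ?_, rfl⟩
      exact (hI.2.2.2 _ (epsk_mem a lam i0 hAZ l) _
        ((hI.2.2.2 _ (mem_Ddiff_of_mem (lopA_mem_Dfil_zero (a j))) φ hφ).2)).1
    rw [hde]
    exact this

lemma PhiI_zero : PhiI a lam i0 ({0} : Set (A →ₗ[k] A)) = {0} := by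
  rw [PhiI, Set.image_singleton, RES_zero]

lemma PsiI_zero : PsiI a lam i0 ({0} : Set (R →ₗ[k] R)) = {0} := by
  have : AddSubgroup.closure (PsiGen a lam i0 ({0} : Set (R →ₗ[k] R))) = ⊥ := by
    rw [eq_bot_iff]
    apply (AddSubgroup.closure_le _).2
    rintro _ ⟨d, hd, d', hd', g, hg, rfl⟩
    have : g = 0 := hg
    subst this
    rw [EXT_zero]
    simp only [SetLike.mem_coe, AddSubgroup.mem_bot]
    ext x; simp
  rw [PsiI, this]
  simp

lemma PhiI_top (hdual : ∀ x : A, ∑ l, lam l x • a l = x)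
    (hAZ : ∀ θ : A →ₗ[R] A, (θ.restrictScalars k : A →ₗ[k] A) ∈ Dfil k A A 0)
    (h1 : a i0 = 1) (hlam1 : ∀ l, lam l 1 = if l = i0 then 1 else 0) :
    PhiI a lam i0 (Ddiff k A A) = Ddiff k R R := by
  apply Set.Subset.antisymm
  · rintro _ ⟨φ, hφ, rfl⟩
    exact RES_mem a lam i0 hdual hφ
  · intro g hg
    exact ⟨EXT a lam i0 g, EXT_mem a lam i0 hdual hAZ h1 hlam1 hg,
      res_ext a lam i0 h1 hlam1 g⟩

lemma PhiI_mono {I I' : Set (A →ₗ[k] A)} (h : I ⊆ I') :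
    PhiI a lam i0 I ⊆ PhiI a lam i0 I' := Set.image_mono h

lemma PsiI_mono {J J' : Set (R →ₗ[k] R)} (h : J ⊆ J') :
    PsiI a lam i0 J ⊆ PsiI a lam i0 J' := by
  apply AddSubgroup.closure_mono
  rintro _ ⟨d, hd, d', hd', g, hg, rfl⟩
  exact ⟨d, hd, d', hd', g, h hg, rfl⟩

lemma PsiI_prod (hdual : ∀ x : A, ∑ l, lam l x • a l = x)
    (hAZ : ∀ θ : A →ₗ[R] A, (θ.restrictScalars k : A →ₗ[k] A) ∈ Dfil k A A 0)
    (h1 : a i0 = 1) (hlam1 : ∀ l, lam l 1 = if l = i0 then 1 else 0)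
    {P Q : Set (R →ₗ[k] R)} (hQ : IsIdealOf k (Ddiff k R R) Q)
    (hPQ : ∀ p ∈ P, ∀ q ∈ Q, p.comp q = 0) :
    ∀ x ∈ PsiI a lam i0 P, ∀ y ∈ PsiI a lam i0 Q, x.comp y = 0 := by
  intro x hx
  have hx' : x ∈ AddSubgroup.closure (PsiGen a lam i0 P) := hx
  clear hx
  induction hx' using AddSubgroup.closure_induction with
  | mem χ hχ =>
    obtain ⟨d, hd, d', hd', p, hp, rfl⟩ := hχ
    intro y hy
    have hy' : y ∈ AddSubgroup.closure (PsiGen a lam i0 Q) := hy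
    clear hy
    induction hy' using AddSubgroup.closure_induction with
    | mem ψ hψ =>
      obtain ⟨e, he, e', he', q, hq, rfl⟩ := hψ
      have hq' : (RES a lam i0 (d' ∘ₗ e)) ∘ₗ q ∈ Q :=
        (hQ.2.2.2 _ (RES_mem a lam i0 hdual
          (DA_comp a lam i0 hdual hAZ h1 hlam1 hd' he)) q hq).1
      have hzero : p ∘ₗ ((RES a lam i0 (d' ∘ₗ e)) ∘ₗ q) = 0 := hPQ p hp _ hq'
      have key : (d ∘ₗ (EXT a lam i0 p) ∘ₗ d').comp (e ∘ₗ (EXT a lam i0 q) ∘ₗ e')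
          = d ∘ₗ ((EXT a lam i0 p) ∘ₗ (d' ∘ₗ e) ∘ₗ (EXT a lam i0 q)) ∘ₗ e' := by
        ext z; simp
      rw [key, ext_comp_ext a lam i0 h1 hlam1, hzero, EXT_zero]
      ext z; simp
    | zero => ext z; simp
    | add y1 y2 _ _ py1 py2 =>
      rw [LinearMap.comp_add, py1, py2, add_zero]
    | neg y1 _ py1 =>
      rw [LinearMap.comp_neg, py1, neg_zero]
  | zero =>
    intro y hy
    ext z; simp
  | add x1 x2 _ _ px1 px2 =>
    intro y hy
    rw [LinearMap.add_comp, px1 y hy, px2 y hy, add_zero]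
  | neg x1 _ px1 =>
    intro y hy
    rw [LinearMap.neg_comp, px1 y hy, neg_zero]

lemma PhiI_prod (hAZ : ∀ θ : A →ₗ[R] A, (θ.restrictScalars k : A →ₗ[k] A) ∈ Dfil k A A 0)
    (h1 : a i0 = 1) (hlam1 : ∀ l, lam l 1 = if l = i0 then 1 else 0)
    {P Q : Set (A →ₗ[k] A)} (hQ : IsIdealOf k (Ddiff k A A) Q)
    (hPQ : ∀ p ∈ P, ∀ q ∈ Q, p.comp q = 0) :
    ∀ x ∈ PhiI a lam i0 P, ∀ y ∈ PhiI a lam i0 Q, x.comp y = 0 := by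
  rintro _ ⟨p, hp, rfl⟩ _ ⟨q, hq, rfl⟩
  have h1' : (RES a lam i0 p).comp (RES a lam i0 q)
      = RES a lam i0 (p ∘ₗ ((F0 a lam i0) ∘ₗ q)) :=
    (res_comp_f0 a lam i0 h1 hlam1 p q).symm
  have hF0q : (F0 a lam i0 : A →ₗ[k] A) ∘ₗ q ∈ Q :=
    (hQ.2.2.2 _ (F0_mem a lam i0 hAZ) q hq).1
  rw [h1', hPQ p hp _ hF0q, RES_zero]

lemma PsiI_top (hdual : ∀ x : A, ∑ l, lam l x • a l = x)
    (hAZ : ∀ θ : A →ₗ[R] A, (θ.restrictScalars k : A →ₗ[k] A) ∈ Dfil k A A 0)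
    (h1 : a i0 = 1) (hlam1 : ∀ l, lam l 1 = if l = i0 then 1 else 0) :
    PsiI a lam i0 (Ddiff k R R) = Ddiff k A A := by
  rw [← PhiI_top a lam i0 hdual hAZ h1 hlam1]
  exact PsiI_PhiI a lam i0 hdual hAZ h1 hlam1 (DA_ideal_self a lam i0 hdual hAZ h1 hlam1)

lemma transfer_all (hdual : ∀ x : A, ∑ l, lam l x • a l = x)
    (hAZ : ∀ θ : A →ₗ[R] A, (θ.restrictScalars k : A →ₗ[k] A) ∈ Dfil k A A 0)
    (h1 : a i0 = 1) (hlam1 : ∀ l, lam l 1 = if l = i0 then 1 else 0) :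
    (DIsSimple k (Ddiff k A A) ↔ DIsSimple k (Ddiff k R R)) ∧
    (DIsNoetherian k (Ddiff k A A) ↔ DIsNoetherian k (Ddiff k R R)) ∧
    (DIsPrime k (Ddiff k A A) ↔ DIsPrime k (Ddiff k R R)) := by
  refine ⟨⟨?_, ?_⟩, ⟨?_, ?_⟩, ⟨?_, ?_⟩⟩
  · -- simple forward
    intro hA J hJ
    rcases hA (PsiI a lam i0 J) (PsiI_ideal a lam i0 hdual hAZ h1 hlam1 hJ) with h | h
    · left
      rw [← PhiI_PsiI a lam i0 h1 hlam1 hdual hJ, h, PhiI_zero]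
    · right
      rw [← PhiI_PsiI a lam i0 h1 hlam1 hdual hJ, h,
        PhiI_top a lam i0 hdual hAZ h1 hlam1]
  · -- simple backward
    intro hR I hI
    rcases hR (PhiI a lam i0 I) (PhiI_ideal a lam i0 hdual hAZ h1 hlam1 hI) with h | h
    · left
      rw [← PsiI_PhiI a lam i0 hdual hAZ h1 hlam1 hI, h, PsiI_zero]
    · right
      rw [← PsiI_PhiI a lam i0 hdual hAZ h1 hlam1 hI, h,
        PsiI_top a lam i0 hdual hAZ h1 hlam1]
  · -- noetherian forward
    intro hA c hc hmono
    obtain ⟨N, hN⟩ := hA (fun i => PsiI a lam i0 (c i))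
      (fun i => PsiI_ideal a lam i0 hdual hAZ h1 hlam1 (hc i))
      (fun i => PsiI_mono a lam i0 (hmono i))
    refine ⟨N, fun i hi => ?_⟩
    rw [← PhiI_PsiI a lam i0 h1 hlam1 hdual (hc i), hN i hi,
      PhiI_PsiI a lam i0 h1 hlam1 hdual (hc N)]
  · -- noetherian backward
    intro hR c hc hmono
    obtain ⟨N, hN⟩ := hR (fun i => PhiI a lam i0 (c i))
      (fun i => PhiI_ideal a lam i0 hdual hAZ h1 hlam1 (hc i))
      (fun i => PhiI_mono a lam i0 (hmono i))
    refine ⟨N, fun i hi => ?_⟩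
    rw [← PsiI_PhiI a lam i0 hdual hAZ h1 hlam1 (hc i), hN i hi,
      PsiI_PhiI a lam i0 hdual hAZ h1 hlam1 (hc N)]
  · -- prime forward
    intro hA P Q hP hQ hPQ hPne
    have hpsi := hA (PsiI a lam i0 P) (PsiI a lam i0 Q)
      (PsiI_ideal a lam i0 hdual hAZ h1 hlam1 hP)
      (PsiI_ideal a lam i0 hdual hAZ h1 hlam1 hQ)
      (PsiI_prod a lam i0 hdual hAZ h1 hlam1 hQ hPQ)
      (by
        intro h
        apply hPne
        rw [← PhiI_PsiI a lam i0 h1 hlam1 hdual hP, h, PhiI_zero])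
    rw [← PhiI_PsiI a lam i0 h1 hlam1 hdual hQ, hpsi, PhiI_zero]
  · -- prime backward
    intro hR P Q hP hQ hPQ hPne
    have hphi := hR (PhiI a lam i0 P) (PhiI a lam i0 Q)
      (PhiI_ideal a lam i0 hdual hAZ h1 hlam1 hP)
      (PhiI_ideal a lam i0 hdual hAZ h1 hlam1 hQ)
      (PhiI_prod a lam i0 hAZ h1 hlam1 hQ hPQ)
      (by
        intro h
        apply hPne
        rw [← PsiI_PhiI a lam i0 hdual hAZ h1 hlam1 hP, h, PsiI_zero])
    rw [← PsiI_PhiI a lam i0 hdual hAZ h1 hlam1 hQ, hphi, PsiI_zero]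

lemma hAZ_of (hAz : IsAzumayaAlg R A) :
    ∀ θ : A →ₗ[R] A, (θ.restrictScalars k : A →ₗ[k] A) ∈ Dfil k A A 0 := by
  obtain ⟨e, he⟩ := hAz.bij
  have key : ∀ t : TensorProduct R A Aᵐᵒᵖ, ((e t).restrictScalars k : A →ₗ[k] A) ∈ Dfil k A A 0 := by
    intro t
    induction t using TensorProduct.induction_on with
    | zero =>
      rw [map_zero]
      have : ((0 : A →ₗ[R] A).restrictScalars k : A →ₗ[k] A) = 0 := by ext x; simp
      rw [this]
      exact (Dfil k A A 0).zero_mem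
    | tmul x y =>
      apply AddSubgroup.subset_closure
      refine ⟨x, 1, rop (MulOpposite.unop y), fun a' => rop_central _ a', ?_⟩
      ext z
      have := he x (MulOpposite.unop y) z
      rw [MulOpposite.op_unop] at this
      simp only [LinearMap.restrictScalars_apply, LinearMap.comp_apply, lopB_apply, rop_apply,
        one_mul]
      rw [this, mul_assoc]
    | add t1 t2 h1 h2 =>
      rw [map_add]
      have : (((e t1 + e t2 : A →ₗ[R] A)).restrictScalars k : A →ₗ[k] A)
          = (e t1).restrictScalars k + (e t2).restrictScalars k := by ext x; simp
      rw [this]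
      exact (Dfil k A A 0).add_mem h1 h2
  intro θ
  have := key (e.symm θ)
  rwa [LinearEquiv.apply_symm_apply] at this

lemma exists_dualbasis (hAz : IsAzumayaAlg R A) :
    ∃ (m : ℕ) (aa : Fin (m+1) → A) (ll : Fin (m+1) → (A →ₗ[R] R)),
      aa 0 = 1 ∧ (∀ l, ll l 1 = if l = 0 then 1 else 0) ∧
        ∀ x : A, ∑ l, ll l x • aa l = x := by
  classical
  haveI := hAz.finite
  haveI := hAz.projective
  haveI := hAz.faithful
  obtain ⟨m, f, g, hsurj, hinj, hfg⟩ := Module.Finite.exists_comp_eq_id_of_projective R A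
  set a0 : Fin m → A := fun i => f (Pi.single i 1) with ha0
  set lam0 : Fin m → (A →ₗ[R] R) := fun i => (LinearMap.proj i) ∘ₗ g with hlam0
  have hdual0 : ∀ x : A, ∑ i, lam0 i x • a0 i = x := by
    intro x
    have e1 : ∀ i, lam0 i x • a0 i = f (Pi.single i (g x i)) := by
      intro i
      rw [ha0, hlam0]
      simp only [LinearMap.comp_apply, LinearMap.proj_apply]
      rw [← map_smul, ← Pi.single_smul, smul_eq_mul, mul_one]
    rw [Finset.sum_congr rfl fun i _ => e1 i, ← map_sum, Finset.univ_sum_single]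
    exact DFunLike.congr_fun hfg x
  -- the trace ideal is everything
  set T : Ideal R := Ideal.span (Set.range fun p : Fin m × Fin m => lam0 p.1 (a0 p.2)) with hT
  have lam_memT : ∀ i x, lam0 i x ∈ T := by
    intro i x
    have : lam0 i x = ∑ j, lam0 j x * lam0 i (a0 j) := by
      conv_lhs => rw [← hdual0 x]
      rw [map_sum]
      exact Finset.sum_congr rfl fun j _ => by rw [map_smul, smul_eq_mul]
    rw [this]
    exact Ideal.sum_mem _ fun j _ => Ideal.mul_mem_left _ _
      (Ideal.subset_span ⟨(i, j), rfl⟩)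
  have hTfg : T.FG := Submodule.fg_span (Set.finite_range _)
  have hle : T ≤ T • T := by
    rw [Ideal.smul_eq_mul]
    rw [hT, Ideal.span_le]
    rintro _ ⟨p, rfl⟩
    simp only [SetLike.mem_coe]
    have : lam0 p.1 (a0 p.2) = ∑ j, lam0 j (a0 p.2) * lam0 p.1 (a0 j) := by
      conv_lhs => rw [← hdual0 (a0 p.2)]
      rw [map_sum]
      exact Finset.sum_congr rfl fun j _ => by rw [map_smul, smul_eq_mul]
    show lam0 p.1 (a0 p.2) ∈ _
    rw [this]
    exact Ideal.sum_mem _ fun j _ => Ideal.mul_mem_mul (lam_memT j (a0 p.2))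
      (Ideal.subset_span ⟨(p.1, j), rfl⟩)
  obtain ⟨r, hrT, hr⟩ := Submodule.exists_mem_and_smul_eq_self_of_fg_of_le_smul T T hTfg hle
  have hone : (1 : R) ∈ T := by
    have hann : ∀ x : A, (1 - r) • x = 0 := by
      intro x
      have h2 : ∀ i : Fin m, lam0 i ((1 - r) • x) = 0 := by
        intro i
        rw [map_smul, smul_eq_mul, sub_mul, one_mul]
        have := hr (lam0 i x) (lam_memT i x)
        rw [smul_eq_mul] at this
        rw [this, sub_self]
      conv_lhs => rw [← hdual0 ((1 - r) • x)]
      rw [Finset.sum_congr rfl fun i _ => by rw [h2 i, zero_smul]]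
      exact Finset.sum_const_zero
    have : (1 - r : R) = 0 := by
      apply FaithfulSMul.eq_of_smul_eq_smul (α := A)
      intro x
      rw [hann x, zero_smul]
    have hr1 : r = 1 := (sub_eq_zero.1 this).symm
    rwa [← hr1]
  rw [hT] at hone
  rw [Ideal.mem_span_range_iff_exists_fun] at hone
  obtain ⟨c, hc⟩ := hone
  set tau : A →ₗ[R] R :=
    ∑ p : Fin m × Fin m, c p • ((lam0 p.1) ∘ₗ (LinearMap.mulLeft R (a0 p.2))) with htau
  have htau1 : tau 1 = 1 := by
    rw [htau]
    simp only [LinearMap.sum_apply, LinearMap.smul_apply, LinearMap.comp_apply,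
      LinearMap.mulLeft_apply, mul_one, smul_eq_mul]
    exact hc
  refine ⟨m, Fin.cons 1 (fun i => a0 i - (tau (a0 i)) • 1),
    Fin.cons tau (fun i => lam0 i - (lam0 i 1) • tau), by simp, ?_, ?_⟩
  · intro l
    refine Fin.cases ?_ ?_ l
    · simp [htau1]
    · intro i
      simp only [Fin.cons_succ, LinearMap.sub_apply, LinearMap.smul_apply, smul_eq_mul,
        htau1, mul_one, sub_self]
      rw [if_neg (Fin.succ_ne_zero i)]
  · intro x
    rw [Fin.sum_univ_succ]
    simp only [Fin.cons_succ, Fin.cons_zero]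
    have expand : ∀ i : Fin m, ((lam0 i - (lam0 i 1) • tau) x) • (a0 i - (tau (a0 i)) • (1:A))
        = ((lam0 i x) • a0 i - (lam0 i x) • ((tau (a0 i)) • (1:A)))
          - ((lam0 i 1 * tau x) • a0 i - (lam0 i 1 * tau x) • ((tau (a0 i)) • (1:A))) := by
      intro i
      simp only [LinearMap.sub_apply, LinearMap.smul_apply, smul_eq_mul]
      rw [sub_smul, smul_sub, smul_sub]
    rw [Finset.sum_congr rfl fun i _ => expand i, Finset.sum_sub_distrib,
      Finset.sum_sub_distrib, Finset.sum_sub_distrib]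
    have e1 : ∑ i, (lam0 i x) • a0 i = x := hdual0 x
    have e2 : ∑ i, (lam0 i x) • ((tau (a0 i)) • (1:A)) = (tau x) • 1 := by
      have : ∀ i, (lam0 i x) • ((tau (a0 i)) • (1:A)) = (lam0 i x * tau (a0 i)) • 1 :=
        fun i => smul_smul _ _ _
      rw [Finset.sum_congr rfl fun i _ => this i, ← Finset.sum_smul]
      congr 1
      rw [show ∑ i, lam0 i x * tau (a0 i) = tau (∑ i, lam0 i x • a0 i) from by
        rw [map_sum]; exact Finset.sum_congr rfl fun i _ => by rw [map_smul, smul_eq_mul],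
        hdual0]
    have e3 : ∑ i, (lam0 i 1 * tau x) • a0 i = (tau x) • 1 := by
      have : ∀ i, (lam0 i 1 * tau x) • a0 i = (tau x) • ((lam0 i 1) • a0 i) := by
        intro i
        rw [smul_smul, mul_comm]
      rw [Finset.sum_congr rfl fun i _ => this i, ← Finset.smul_sum, hdual0 1]
    have e4 : ∑ i, (lam0 i 1 * tau x) • ((tau (a0 i)) • (1:A)) = (tau x) • 1 := by
      have : ∀ i, (lam0 i 1 * tau x) • ((tau (a0 i)) • (1:A))
          = ((tau x) * (lam0 i 1 * tau (a0 i))) • (1:A) := by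
        intro i
        rw [smul_smul]
        ring_nf
      rw [Finset.sum_congr rfl fun i _ => this i, ← Finset.sum_smul, ← Finset.mul_sum]
      rw [show ∑ i, lam0 i 1 * tau (a0 i) = tau (∑ i, lam0 i 1 • a0 i) from by
        rw [map_sum]; exact Finset.sum_congr rfl fun i _ => by rw [map_smul, smul_eq_mul],
        hdual0 1, htau1, mul_one]
    rw [e1, e2, e3, e4]
    abel

end Corr
end Transfer

/-- For an Azumaya algebra `A` over a commutative Noetherian `k`-algebra `R`: `D_k(A)` is
simple iff `D_k(R)` is, `D_k(A)` is Noetherian iff `D_k(R)` is, and `D_k(A)` is prime iff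
`D_k(R)` is. -/
theorem simple_noetherian_prime_transfer (R A : Type*) [CommRing R] [Algebra k R]
    [IsNoetherianRing R] [Ring A] [Algebra R A] [Algebra k A] [IsScalarTower k R A]
    [SMulCommClass R k A] (hAz : IsAzumayaAlg R A) :
    (DIsSimple k (Ddiff k A A) ↔ DIsSimple k (Ddiff k R R)) ∧
    (DIsNoetherian k (Ddiff k A A) ↔ DIsNoetherian k (Ddiff k R R)) ∧
    (DIsPrime k (Ddiff k A A) ↔ DIsPrime k (Ddiff k R R)) := by
  obtain ⟨m, aa, ll, h1, hlam1, hdual⟩ := Transfer.exists_dualbasis hAz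
  exact Transfer.transfer_all aa ll 0 hdual (Transfer.hAZ_of hAz) h1 hlam1

end Stmt13
end
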